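/- arXiv:1609.06696 — 10 statements merged into one kernel-verified Lean document; each statement's English description precedes it below -/
import Mathlib

section
/- Let p be an odd prime and g a polynomial with integer coefficients. The number of solutions x with 1 ≤ x ≤ p(p-1), p ∤ x, to x^(g(x)) ≡ x (mod p) equals the sum over x0 from 1 to p-1 of gcd(p-1, g(x0)-1). -/
/-!
By the Chinese remainder theorem, `x ↦ (x mod p, x mod (p - 1))` identifies `{1, …, p(p - 1)}`
with `𝔽_p × ℤ/(p - 1)`. For `a = x mod p` nonzero, Fermat's little theorem makes `a ^ g(x)` depend
only on `g(x) mod (p - 1)`, hence only on `b = x mod (p - 1)`. For fixed `b`, the admissible `a`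
are the solutions of `a ^ (g(b) - 1) = 1` in the cyclic group `𝔽_pˣ` of order `p - 1`, and there
are exactly `gcd(p - 1, g(b) - 1)` of them.
-/

open Finset

theorem Int.ModEq.gcd_eq {n a b : ℤ} (h : a ≡ b [ZMOD n]) : Int.gcd n a = Int.gcd n b := by
  rw [Int.gcd_comm, ← Int.gcd_emod, h.eq, Int.gcd_emod, Int.gcd_comm]

theorem Int.ModEq.eval {n a b : ℤ} (g : Polynomial ℤ) (h : a ≡ b [ZMOD n]) :
    g.eval a ≡ g.eval b [ZMOD n] :=
  Int.modEq_iff_dvd.2 ((Int.modEq_iff_dvd.1 h).trans (Polynomial.sub_dvd_eval_sub _ _ g))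

theorem FiniteField.zpow_eq_zpow_of_modEq {K : Type*} [GroupWithZero K] [Fintype K] {a : K}
    (ha : a ≠ 0) {k l : ℤ} (h : k ≡ l [ZMOD (Fintype.card K - 1 : ℕ)]) : a ^ k = a ^ l := by
  obtain ⟨t, ht⟩ := h.dvd
  rw [show l = k + (Fintype.card K - 1 : ℕ) * t by omega, zpow_add₀ ha, zpow_mul, zpow_natCast,
    FiniteField.pow_card_sub_one_eq_one a ha, one_zpow, mul_one]

theorem IsCyclic.card_zpow_eq_one {G : Type*} [CommGroup G] [IsCyclic G] [Fintype G]
    [DecidableEq G] (k : ℤ) : #{u : G | u ^ k = 1} = Int.gcd (Fintype.card G) k := by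
  have hker := IsCyclic.card_powMonoidHom_ker G k.natAbs
  rw [Nat.card_eq_fintype_card, Nat.card_eq_fintype_card] at hker
  rw [Int.gcd, Int.natAbs_natCast, ← hker, ← Fintype.card_subtype]
  refine Fintype.card_congr (Equiv.subtypeEquivRight fun u => ?_)
  simp only [MonoidHom.mem_ker, powMonoidHom_apply, pow_natAbs_eq_one]

theorem FiniteField.card_ne_zero_zpow_eq_self {K : Type*} [Field K] [Fintype K]
    [DecidableEq K] (k : ℤ) :
    #{a : K | a ≠ 0 ∧ a ^ k = a} = Int.gcd (Fintype.card K - 1 : ℕ) (k - 1) := by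
  rw [← Fintype.card_units, ← IsCyclic.card_zpow_eq_one]
  symm
  refine card_bij (fun u _ => (u : K)) ?_ (fun u _ v _ h => Units.ext h) ?_
  · intro u hu
    simp only [mem_filter_univ] at hu ⊢
    refine ⟨u.ne_zero, ?_⟩
    rw [← Units.val_zpow_eq_zpow_val, ← sub_add_cancel k 1, zpow_add_one, hu, one_mul]
  · intro a ha
    simp only [mem_filter_univ] at ha
    refine ⟨Units.mk0 a ha.1, ?_, rfl⟩
    simp only [mem_filter_univ]
    ext
    rw [Units.val_zpow_eq_zpow_val, Units.val_mk0, zpow_sub_one₀ ha.1, ha.2, Units.val_one,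
      mul_inv_cancel₀ ha.1]

theorem sum_Icc_natCast_eq_sum_zmod {M : Type*} [AddCommMonoid M] (n : ℕ) [NeZero n]
    (f : ZMod n → M) : ∑ x ∈ Icc 1 n, f x = ∑ a, f a := by
  refine sum_nbij' (fun x => (x : ZMod n)) (fun a => if a = 0 then n else a.val) ?_ ?_ ?_ ?_ ?_
  · intro x _
    exact mem_univ _
  · intro a _
    simp only [mem_Icc]
    split_ifs with h
    · exact ⟨NeZero.one_le, le_rfl⟩
    · exact ⟨Nat.one_le_iff_ne_zero.2 ((ZMod.val_ne_zero a).2 h), (ZMod.val_lt a).le⟩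
  · intro x hx
    simp only [mem_Icc] at hx
    split_ifs with h
    · rw [ZMod.natCast_eq_zero_iff] at h
      exact le_antisymm (Nat.le_of_dvd hx.1 h) hx.2
    · rw [ZMod.val_natCast, Nat.mod_eq_of_lt (lt_of_le_of_ne hx.2 ?_)]
      exact fun hxn => h (hxn ▸ ZMod.natCast_self n)
  · intro a _
    split_ifs with h
    · simp [h]
    · exact ZMod.natCast_zmod_val a
  · intro x _
    rfl

theorem card_filter_Icc_mul_eq_sum {m n : ℕ} [NeZero m] [NeZero n] (hmn : m.Coprime n)
    (P : ZMod m → ZMod n → Prop) [∀ a b, Decidable (P a b)] :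
    #{x ∈ Icc 1 (m * n) | P ((x : ℕ) : ZMod m) (x : ZMod n)} = ∑ b, #{a | P a b} := by
  have : NeZero (m * n) := ⟨mul_ne_zero (NeZero.ne m) (NeZero.ne n)⟩
  let e := (ZMod.chineseRemainder hmn).toEquiv
  have he (x : ℕ) : e x = ((x : ZMod m), (x : ZMod n)) := map_natCast (ZMod.chineseRemainder hmn) x
  calc #{x ∈ Icc 1 (m * n) | P ((x : ℕ) : ZMod m) (x : ZMod n)}
      = ∑ x ∈ Icc 1 (m * n), if P (e x).1 (e x).2 then 1 else 0 := by simp only [card_filter, he]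
    _ = ∑ q : ZMod m × ZMod n, if P q.1 q.2 then 1 else 0 := by
      rw [sum_Icc_natCast_eq_sum_zmod (m * n) (fun c => if P (e c).1 (e c).2 then 1 else 0)]
      exact Fintype.sum_equiv e _ _ fun _ => rfl
    _ = ∑ b, #{a | P a b} := by simp only [Fintype.sum_prod_type_right, card_filter]

theorem stmt_2_general (p : ℕ) [Fact p.Prime] (g : Polynomial ℤ) :
    ((Finset.Icc 1 (p * (p - 1))).filter fun x : ℕ =>
        ¬ p ∣ x ∧ (x : ZMod p) ^ (g.eval (x : ℤ)) = (x : ZMod p)).card =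
      ∑ x0 ∈ Finset.Icc 1 (p - 1), Int.gcd ((p : ℤ) - 1) (g.eval (x0 : ℤ) - 1) := by
  have hp : p.Prime := Fact.out
  have : NeZero (p - 1) := ⟨(Nat.sub_pos_of_lt hp.one_lt).ne'⟩
  have hcop : p.Coprime (p - 1) :=
    (Nat.coprime_self_sub_right hp.one_le).2 (Nat.coprime_one_right p)
  have hval (x : ℕ) : ((x : ZMod (p - 1)).val : ℤ) ≡ x [ZMOD (p - 1 : ℕ)] := by
    rw [ZMod.val_natCast]
    exact Int.natCast_modEq_iff.2 (Nat.mod_modEq x _)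
  let P (a : ZMod p) (b : ZMod (p - 1)) : Prop := a ≠ 0 ∧ a ^ g.eval (b.val : ℤ) = a
  calc _ = #{x ∈ Icc 1 (p * (p - 1)) | P ((x : ℕ) : ZMod p) (x : ZMod (p - 1))} := by
        refine congrArg card (filter_congr fun x _ => ?_)
        rw [← ZMod.natCast_eq_zero_iff]
        refine and_congr_right fun hx => ?_
        have hexp : g.eval (x : ℤ) ≡ g.eval ((x : ZMod (p - 1)).val : ℤ)
            [ZMOD (Fintype.card (ZMod p) - 1 : ℕ)] := by
          rw [ZMod.card]
          exact ((hval x).eval g).symm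
        rw [FiniteField.zpow_eq_zpow_of_modEq hx hexp]
    _ = ∑ b, #{a | P a b} := card_filter_Icc_mul_eq_sum hcop P
    _ = ∑ b : ZMod (p - 1), Int.gcd (p - 1 : ℕ) (g.eval (b.val : ℤ) - 1) := by
        simp only [P, FiniteField.card_ne_zero_zpow_eq_self, ZMod.card]
    _ = _ := by
        rw [← sum_Icc_natCast_eq_sum_zmod (p - 1), ← Nat.cast_pred hp.pos]
        exact sum_congr rfl fun x _ => (((hval x).eval g).sub_right 1).gcd_eq

theorem stmt_2 (p : ℕ) [Fact p.Prime] (hp2 : p ≠ 2) (g : Polynomial ℤ) :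
    ((Finset.Icc 1 (p * (p - 1))).filter fun x : ℕ =>
        ¬ p ∣ x ∧ (x : ZMod p) ^ (g.eval (x : ℤ)) = (x : ZMod p)).card =
      ∑ x0 ∈ Finset.Icc 1 (p - 1), Int.gcd ((p : ℤ) - 1) (g.eval (x0 : ℤ) - 1) :=
  stmt_2_general p g
end

section
/- For any positive integer m and polynomial g with integer coefficients, the sum over x0 from 1 to m of gcd(m, g(x0)-1) equals the sum over divisors d of m of φ(d)·(m/d)·N_{g-1}(d), where N_{g-1}(d) is the number of residues z modulo d with g(z) ≡ 1 (mod d). -/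
open Finset

lemma per_iter (d : ℕ) (P : ℕ → Prop) (hP : ∀ x, P (x + d) ↔ P x) :
    ∀ j x, P (x + j * d) ↔ P x := by
  intro j
  induction j with
  | zero => simp
  | succ k ih =>
    intro x
    have : x + (k + 1) * d = (x + k * d) + d := by ring
    rw [this, hP, ih]

lemma count_range_mul (d : ℕ) (P : ℕ → Prop) [DecidablePred P]
    (hP : ∀ x, P (x + d) ↔ P x) (k : ℕ) :
    ((Finset.range (k * d)).filter P).card = k * ((Finset.range d).filter P).card := by
  induction k with
  | zero => simp
  | succ k ih =>
    have h1 : (k + 1) * d = k * d + d := by ring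
    rw [h1, Finset.range_add, Finset.filter_union, Finset.card_union_of_disjoint,
      Finset.filter_map, Finset.card_map, ih]
    · have : Finset.filter (P ∘ ⇑(addLeftEmbedding (k * d))) (Finset.range d)
          = Finset.filter P (Finset.range d) := by
        apply Finset.filter_congr
        intro x _
        simp only [Function.comp, addLeftEmbedding_apply]
        rw [add_comm]
        exact per_iter d P hP k x
      rw [this]; ring
    · apply Finset.disjoint_filter_filter
      simp only [Finset.disjoint_left, Finset.mem_range, Finset.mem_map, addLeftEmbedding_apply]
      rintro x hx ⟨y, _, rfl⟩
      omega

lemma count_Icc (m d : ℕ) (hm : 1 ≤ m) (hd : d ∣ m) (hd0 : 0 < d)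
    (P : ℕ → Prop) [DecidablePred P] (hP : ∀ x, P (x + d) ↔ P x) :
    ((Finset.Icc 1 m).filter P).card = (m / d) * ((Finset.range d).filter P).card := by
  have hmd : m = (m / d) * d := (Nat.div_mul_cancel hd).symm
  have hPm : P m ↔ P 0 := by
    conv_lhs => rw [hmd]
    simpa using per_iter d P hP (m / d) 0
  -- card over Icc 1 m equals card over range m
  have key : ((Finset.Icc 1 m).filter P).card = ((Finset.range m).filter P).card := by
    have h1 : Finset.range (m + 1) = insert m (Finset.range m) := Finset.range_add_one
    have h2 : Finset.range (m + 1) = insert 0 (Finset.Icc 1 m) := by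
      ext x
      simp [Finset.mem_range, Finset.mem_Icc]
      omega
    have c1 : ((Finset.range (m+1)).filter P).card
        = ((Finset.range m).filter P).card + (if P m then 1 else 0) := by
      rw [h1, Finset.filter_insert]
      split
      · rw [Finset.card_insert_of_notMem (by simp)]
      · simp
    have c2 : ((Finset.range (m+1)).filter P).card
        = ((Finset.Icc 1 m).filter P).card + (if P 0 then 1 else 0) := by
      rw [h2, Finset.filter_insert]
      split
      · rw [Finset.card_insert_of_notMem (by simp)]
      · simp
    rw [c1] at c2
    simp only [hPm] at c2
    omega
  rw [key]
  conv_lhs => rw [hmd]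
  exact count_range_mul d P hP (m / d)

lemma gcd_eq_sum (m : ℕ) (hm : m ≠ 0) (a : ℤ) :
    Int.gcd (m : ℤ) a = ∑ d ∈ m.divisors, if (d : ℤ) ∣ a then Nat.totient d else 0 := by
  have h1 : (Int.gcd (m : ℤ) a).divisors = m.divisors.filter (fun d : ℕ => (d : ℤ) ∣ a) := by
    ext d
    simp only [Nat.mem_divisors, Finset.mem_filter]
    constructor
    · rintro ⟨hdvd, hne⟩
      have : Int.gcd (m : ℤ) a = Nat.gcd m a.natAbs := by simp [Int.gcd]
      rw [this] at hdvd
      refine ⟨⟨hdvd.trans (Nat.gcd_dvd_left _ _), hm⟩, ?_⟩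
      exact Int.natCast_dvd.mpr (hdvd.trans (Nat.gcd_dvd_right _ _))
    · rintro ⟨⟨hdm, _⟩, hda⟩
      have h2 : Int.gcd (m : ℤ) a = Nat.gcd m a.natAbs := by simp [Int.gcd]
      constructor
      · rw [h2]; exact Nat.dvd_gcd hdm (Int.natCast_dvd.mp hda)
      · rw [h2]
        intro h
        exact hm (Nat.eq_zero_of_gcd_eq_zero_left h)
  calc Int.gcd (m : ℤ) a = ∑ d ∈ (Int.gcd (m : ℤ) a).divisors, Nat.totient d :=
        (Nat.sum_totient _).symm
    _ = ∑ d ∈ m.divisors.filter (fun d : ℕ => (d : ℤ) ∣ a), Nat.totient d := by rw [h1]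
    _ = _ := Finset.sum_filter _ _

theorem stmt_3 (m : ℕ) (hm : 1 ≤ m) (g : Polynomial ℤ) :
    ∑ x0 ∈ Finset.Icc 1 m, Int.gcd (m : ℤ) (g.eval (x0 : ℤ) - 1) =
      ∑ d ∈ m.divisors, Nat.totient d * (m / d) *
        ((Finset.range d).filter fun z : ℕ => (d : ℤ) ∣ (g.eval (z : ℤ) - 1)).card := by
  have hm0 : m ≠ 0 := by omega
  calc ∑ x0 ∈ Finset.Icc 1 m, Int.gcd (m : ℤ) (g.eval (x0 : ℤ) - 1)
      = ∑ x0 ∈ Finset.Icc 1 m, ∑ d ∈ m.divisors,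
          if (d : ℤ) ∣ (g.eval (x0 : ℤ) - 1) then Nat.totient d else 0 := by
        exact Finset.sum_congr rfl fun x _ => gcd_eq_sum m hm0 _
    _ = ∑ d ∈ m.divisors, ∑ x0 ∈ Finset.Icc 1 m,
          if (d : ℤ) ∣ (g.eval (x0 : ℤ) - 1) then Nat.totient d else 0 := Finset.sum_comm
    _ = ∑ d ∈ m.divisors, Nat.totient d *
          ((Finset.Icc 1 m).filter (fun x : ℕ => (d : ℤ) ∣ (g.eval (x : ℤ) - 1))).card := by
        refine Finset.sum_congr rfl fun d _ => ?_
        rw [← Finset.sum_filter, Finset.sum_const, smul_eq_mul, mul_comm]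
    _ = _ := by
        refine Finset.sum_congr rfl fun d hd => ?_
        obtain ⟨hdm, _⟩ := Nat.mem_divisors.mp hd
        have hd0 : 0 < d := Nat.pos_of_mem_divisors hd
        have hper : ∀ x : ℕ, ((d : ℤ) ∣ (g.eval ((x + d : ℕ) : ℤ) - 1)) ↔
            ((d : ℤ) ∣ (g.eval (x : ℤ) - 1)) := by
          intro x
          have hdvd : (d : ℤ) ∣ g.eval ((x + d : ℕ) : ℤ) - g.eval (x : ℤ) := by
            have := Polynomial.sub_dvd_eval_sub ((x + d : ℕ) : ℤ) (x : ℤ) g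
            have heq : ((x + d : ℕ) : ℤ) - (x : ℤ) = (d : ℤ) := by push_cast; ring
            rwa [heq] at this
          constructor
          · intro h
            have := dvd_sub h hdvd
            simpa using this
          · intro h
            have := dvd_add hdvd h
            simpa using this
        rw [count_Icc m d hm hdm hd0 _ hper, mul_assoc]
end

section
/- Let p be an odd prime, e ≥ 1, g ∈ Z[X], and let x1 be a unit modulo p with x1^(g(x0)) ≡ x1 (mod p) for a given x0 and g(x1) ≢ 1 (mod p). Then for each e there is exactly one residue x modulo p^e with x ≡ x1 (mod p) such that the interpolated function ω(x)^(g(x0))·⟨x⟩^(g(x)) ≡ x (mod p^e); i.e., nonsingular solutions lift uniquely by Hensel's lemma. -/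
/-!
The kernel of reduction `(ZMod (p ^ e))ˣ → (ZMod p)ˣ` has order `p ^ (e - 1)`, prime to
`p - 1`, so reduction is injective on `(p - 1)`-torsion; raising any lift to the power
`p ^ (e - 1)` gives a torsion lift, the Teichmüller lift `t` of `x1`. Since `X ≡ x0 (mod p - 1)`,
the exponent `g(X)` only matters modulo `p - 1`, and `t ^ g(x0) = t` because both sides are
torsion with the same reduction `x1 ^ g(x0) = x1`. Conversely, if `u ^ g(X) = u` with
`p ∤ g(X) - 1`, the order of `u` divides `g(X) - 1` and `p ^ (e - 1) * (p - 1)`, hence `p - 1`,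
so `u` is the torsion lift of `x1`, i.e. `t`.
-/

open Polynomial

theorem Nat.coprime_pow_self_sub_one {p : ℕ} (k : ℕ) (hp : 1 ≤ p) : (p ^ k).Coprime (p - 1) :=
  ((Nat.coprime_self_sub_right hp).mpr (Nat.coprime_one_right p)).pow_left k

section Group

variable {G : Type*} [Group G]

theorem zpow_eq_zpow_of_pow_eq_one_of_dvd_sub {u : G} {n : ℕ} (hu : u ^ n = 1) {a b : ℤ}
    (h : (n : ℤ) ∣ a - b) : u ^ a = u ^ b :=
  zpow_eq_zpow_iff_modEq.mpr <|
    (Int.modEq_iff_dvd.mpr h).symm.of_dvd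
      (Int.natCast_dvd_natCast.mpr (orderOf_dvd_of_pow_eq_one hu))

theorem pow_eq_one_of_zpow_eq_one_of_not_dvd [Finite G] {p a m : ℕ} (hp : p.Prime)
    (hcard : Nat.card G = p ^ a * m) {u : G} {n : ℤ} (hn : ¬(p : ℤ) ∣ n) (hu : u ^ n = 1) :
    u ^ m = 1 := by
  have hn : ¬p ∣ orderOf u := fun hd =>
    hn ((Int.natCast_dvd_natCast.mpr hd).trans (orderOf_dvd_iff_zpow_eq_one.mpr hu))
  have hcop : (orderOf u).Coprime (p ^ a) := ((hp.coprime_iff_not_dvd.mpr hn).pow_left a).symm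
  exact orderOf_dvd_iff_pow_eq_one.mp (hcop.dvd_of_dvd_mul_left (hcard ▸ orderOf_dvd_natCard u))

end Group

namespace ZMod

theorem exists_intCast_eq_and_intCast_eq {m n : ℕ} (h : m.Coprime n) (a : ZMod m) (b : ZMod n) :
    ∃ X : ℤ, (X : ZMod m) = a ∧ (X : ZMod n) = b := by
  obtain ⟨X, hX⟩ := intCast_surjective ((chineseRemainder h).symm (a, b))
  have hX := congrArg (chineseRemainder h) hX
  rw [RingEquiv.apply_symm_apply, map_intCast] at hX
  exact ⟨X, congrArg Prod.fst hX, congrArg Prod.snd hX⟩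

variable {p : ℕ} [hp : Fact p.Prime] {e : ℕ}

theorem isUnit_of_castHom_ne_zero (he : e ≠ 0) {y : ZMod (p ^ e)}
    (hy : castHom (dvd_pow_self p he) (ZMod p) y ≠ 0) : IsUnit y := by
  rw [← natCast_zmod_val y, map_natCast, Ne, natCast_eq_zero_iff] at hy
  rw [← natCast_zmod_val y, isUnit_iff_coprime]
  exact ((hp.out.coprime_iff_not_dvd.mpr hy).pow_left e).symm

theorem natCard_units_prime_pow (he : e ≠ 0) :
    Nat.card (ZMod (p ^ e))ˣ = p ^ (e - 1) * (p - 1) := by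
  rw [Nat.card_eq_fintype_card, card_units_eq_totient,
    Nat.totient_prime_pow hp.out (Nat.pos_of_ne_zero he)]

theorem natCard_ker_unitsMap_prime_pow (he : e ≠ 0) :
    Nat.card (unitsMap (dvd_pow_self p he)).ker = p ^ (e - 1) := by
  have h := (unitsMap (dvd_pow_self p he)).ker.card_mul_index
  rw [Subgroup.index_ker, MonoidHom.range_eq_top.mpr (unitsMap_surjective _), Subgroup.card_top,
    natCard_units_prime_pow he, Nat.card_eq_fintype_card (α := (ZMod p)ˣ), card_units] at h
  exact Nat.eq_of_mul_eq_mul_right (Nat.sub_pos_of_lt hp.out.one_lt) h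

theorem pow_eq_one_of_mem_ker_unitsMap (he : e ≠ 0) {w : (ZMod (p ^ e))ˣ}
    (hw : w ∈ (unitsMap (dvd_pow_self p he)).ker) : w ^ p ^ (e - 1) = 1 := by
  have h := pow_card_eq_one' (x := (⟨w, hw⟩ : (unitsMap (dvd_pow_self p he)).ker))
  rw [natCard_ker_unitsMap_prime_pow he] at h
  exact congrArg Subtype.val h

theorem eq_of_unitsMap_eq_of_pow_eq_one (he : e ≠ 0) {u v : (ZMod (p ^ e))ˣ}
    (hu : u ^ (p - 1) = 1) (hv : v ^ (p - 1) = 1)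
    (h : unitsMap (dvd_pow_self p he) u = unitsMap (dvd_pow_self p he) v) : u = v := by
  have hker : u * v⁻¹ ∈ (unitsMap (dvd_pow_self p he)).ker := by
    rw [MonoidHom.mem_ker, map_mul, map_inv, h, mul_inv_cancel]
  have h1 : (u * v⁻¹) ^ (p ^ (e - 1)).gcd (p - 1) = 1 :=
    pow_gcd_eq_one.mpr ⟨pow_eq_one_of_mem_ker_unitsMap he hker,
      by rw [mul_pow, inv_pow, hu, hv, inv_one, one_mul]⟩
  rw [Nat.coprime_pow_self_sub_one _ hp.out.one_le, pow_one] at h1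
  exact mul_inv_eq_one.mp h1

theorem exists_pow_eq_one_unitsMap_eq (he : e ≠ 0) (x : (ZMod p)ˣ) :
    ∃ t : (ZMod (p ^ e))ˣ, t ^ (p - 1) = 1 ∧ unitsMap (dvd_pow_self p he) t = x := by
  obtain ⟨u, rfl⟩ := unitsMap_surjective (dvd_pow_self p he) x
  refine ⟨u ^ p ^ (e - 1), ?_, ?_⟩
  · rw [← pow_mul, ← natCard_units_prime_pow he, pow_card_eq_one']
  · ext
    rw [map_pow, Units.val_pow_eq_pow_val, pow_card_pow]

theorem zpow_eq_self_of_unitsMap_zpow_eq (he : e ≠ 0) {t : (ZMod (p ^ e))ˣ}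
    (ht : t ^ (p - 1) = 1) {n : ℤ}
    (hn : unitsMap (dvd_pow_self p he) t ^ n = unitsMap (dvd_pow_self p he) t) : t ^ n = t := by
  refine eq_of_unitsMap_eq_of_pow_eq_one he ?_ ht (by rwa [map_zpow])
  rw [← zpow_natCast, ← zpow_mul, mul_comm, zpow_mul, zpow_natCast, ht, one_zpow]

theorem pow_sub_one_eq_one_of_zpow_eq_self (he : e ≠ 0) {u : (ZMod (p ^ e))ˣ} {n : ℤ}
    (hn : ¬(p : ℤ) ∣ n - 1) (hu : u ^ n = u) : u ^ (p - 1) = 1 :=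
  pow_eq_one_of_zpow_eq_one_of_not_dvd hp.out (natCard_units_prime_pow he) hn
    (by rw [zpow_sub_one, hu, mul_inv_cancel])

end ZMod

theorem stmt_4 (p : ℕ) [Fact p.Prime] (e : ℕ) (he : 1 ≤ e)
    (g : Polynomial ℤ) (x0 : ℤ) (x1 : ZMod p) (hx1 : x1 ≠ 0)
    (hfix : x1 ^ (g.eval x0) = x1)
    (hnonsing : (g.map (Int.castRingHom (ZMod p))).eval x1 ≠ 1) :
    ∃! x : ZMod (p ^ e),
      ZMod.castHom (dvd_pow_self p (by omega : e ≠ 0)) (ZMod p) x = x1 ∧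
      ∀ X : ℤ, (X : ZMod (p ^ e)) = x → (X : ZMod (p - 1)) = (x0 : ZMod (p - 1)) →
        ∀ hX : IsUnit ((X : ZMod (p ^ e))), hX.unit ^ (g.eval X) = hX.unit := by
  have he0 : e ≠ 0 := by omega
  obtain ⟨t, ht, htx⟩ := ZMod.exists_pow_eq_one_unitsMap_eq he0 (Units.mk0 x1 hx1)
  have htfix : t ^ g.eval x0 = t :=
    ZMod.zpow_eq_self_of_unitsMap_zpow_eq he0 ht (by rw [htx]; ext; simp [hfix])
  refine ⟨t, ⟨congrArg Units.val htx, ?_⟩, ?_⟩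
  · intro X hXt hXx0 hX
    have hdvd : ((p - 1 : ℕ) : ℤ) ∣ g.eval X - g.eval x0 :=
      ((ZMod.intCast_eq_intCast_iff_dvd_sub _ _ _).mp hXx0.symm).trans (sub_dvd_eval_sub _ _ g)
    rw [Units.ext (hX.unit_spec.trans hXt), zpow_eq_zpow_of_pow_eq_one_of_dvd_sub ht hdvd, htfix]
  · rintro y ⟨hy, hyX⟩
    obtain ⟨X, hXy, hXx0⟩ := ZMod.exists_intCast_eq_and_intCast_eq
      (Nat.coprime_pow_self_sub_one e (Fact.out : p.Prime).one_le) y x0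
    have hX : IsUnit (X : ZMod (p ^ e)) := hXy ▸ ZMod.isUnit_of_castHom_ne_zero he0 (hy ▸ hx1)
    have hXp : (X : ZMod p) = x1 := by
      rw [← map_intCast (ZMod.castHom (dvd_pow_self p he0) (ZMod p)), hXy, hy]
    have hgX : ¬(p : ℤ) ∣ g.eval X - 1 := by
      rwa [← ZMod.intCast_zmod_eq_zero_iff_dvd, Int.cast_sub, Int.cast_one, sub_eq_zero,
        ← eq_intCast (Int.castRingHom (ZMod p)), ← eval_map_apply, eq_intCast, hXp]
    have hXt :
        ZMod.unitsMap (dvd_pow_self p he0) hX.unit = ZMod.unitsMap (dvd_pow_self p he0) t := by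
      rw [htx]
      ext
      show ZMod.castHom (dvd_pow_self p he0) (ZMod p) (hX.unit : ZMod (p ^ e)) = x1
      rw [hX.unit_spec, map_intCast, hXp]
    have hXtors : hX.unit ^ (p - 1) = 1 :=
      ZMod.pow_sub_one_eq_one_of_zpow_eq_self he0 hgX (hyX X hXy hXx0 hX)
    rw [← hXy, ← hX.unit_spec, ZMod.eq_of_unitsMap_eq_of_pow_eq_one he0 hXtors ht hXt]
end

section
/- Let p be an odd prime with p ∤ n. The number of solutions x with 1 ≤ x ≤ p^e(p-1), p ∤ x, to x^(x^n) ≡ x (mod p^e) equals Σ_{x0=1}^{p-1} gcd(p-1, x0^n−1) + Σ_{x0=1}^{p-1} gcd(p-1, n, x0^n−1)·(p^⌊e/2⌋ − 1). -/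
/-!
Fix a generator `γ` of the cyclic group `(ZMod (p ^ e))ˣ`, of order `p ^ (e - 1) * (p - 1)`. By
the Chinese remainder theorem, a unit `x` in `[1, p ^ e * (p - 1)]` corresponds to the pair `(k, y)`
with `x ≡ γ ^ k [MOD p ^ e]`, `k < p ^ (e - 1) * (p - 1)` and `x ≡ y [MOD p - 1]`, `y ∈ [1, p - 1]`.
The congruence `x ^ x ^ n ≡ x` says `p ^ (e - 1) * (p - 1) ∣ k * (x ^ n - 1)`. Its `(p - 1)`-part is
`p - 1 ∣ k * (y ^ n - 1)`. For its `p`-part write `gcd (p ^ (e - 1)) k = p ^ w`: when `w < e - 1` it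
asks `p ^ a ∣ x ^ n - 1` for `a = e - 1 - w`, i.e. `φ (p ^ a) ∣ k * n` because the image of `γ`
generates `(ZMod (p ^ a))ˣ`; as `p ∤ n` this means `p - 1 ∣ k * n` and `a - 1 ≤ w`, that is
`p ^ (e - 1 - e / 2) ∣ k`. Counting the exponents `k` by inclusion–exclusion gives the two gcd
terms.
-/

open Finset

namespace Nat

theorem card_filter_dvd_range_mul {d : ℕ} (m : ℕ) (hd : 0 < d) :
    #{k ∈ range (d * m) | d ∣ k} = m := by
  have := count_modEq_card (d * m) hd 0
  simp_rw [modEq_zero_iff_dvd, count_eq_card_filter_range] at this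
  simpa [hd.ne'] using this

theorem dvd_mul_iff_div_gcd_dvd {q k c : ℕ} (hq : 0 < q) : q ∣ k * c ↔ q / gcd q k ∣ c := by
  have h := Nat.mul_dvd_mul_iff_left (b := q / gcd q k) (c := c) (gcd_pos_of_pos_left k hq)
  rwa [Nat.mul_div_cancel' (gcd_dvd_left q k), dvd_gcd_mul_iff_dvd_mul] at h

theorem card_filter_dvd_mul_and_dvd {q r s : ℕ} (D : ℕ) (hqr : Coprime q r) (hsr : s ∣ r)
    (hq : 0 < q) (hs : 0 < s) :
    #{k ∈ range (r * q) | q ∣ k * D ∧ s ∣ k} = gcd q D * (r / s) := by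
  have hg : 0 < gcd q D := gcd_pos_of_pos_left D hq
  have hiff : ∀ k, q ∣ k * D ∧ s ∣ k ↔ q / gcd q D * s ∣ k := fun k => by
    have hcop : Coprime (q / gcd q D) s :=
      (hqr.coprime_dvd_left (div_dvd_of_dvd (gcd_dvd_left q D))).coprime_dvd_right hsr
    rw [mul_comm k, dvd_mul_iff_div_gcd_dvd hq, ← hcop.lcm_eq_mul, lcm_dvd_iff]
  have hrq : r * q = q / gcd q D * s * (gcd q D * (r / s)) := by
    calc r * q = s * (r / s) * (q / gcd q D * gcd q D) := by
          rw [Nat.mul_div_cancel' hsr, Nat.div_mul_cancel (gcd_dvd_left q D)]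
      _ = q / gcd q D * s * (gcd q D * (r / s)) := by ring
  simp_rw [hiff, hrq]
  exact card_filter_dvd_range_mul _ (Nat.mul_pos (div_pos (gcd_le_left D hq) hg) hs)

theorem card_filter_dvd_mul_and_or {q r s : ℕ} (n D : ℕ) (hqr : Coprime q r) (hsr : s ∣ r)
    (hq : 0 < q) (hr : 0 < r) :
    #{k ∈ range (r * q) | q ∣ k * D ∧ (r ∣ k ∨ (q ∣ k * n ∧ s ∣ k))} =
      gcd q D + gcd q (gcd n D) * (r / s - 1) := by
  have hs : 0 < s := pos_of_dvd_of_pos hsr hr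
  have hgcd : ∀ k, q ∣ k * n ∧ q ∣ k * D ↔ q ∣ k * gcd n D := fun k => by
    rw [← dvd_gcd_iff, gcd_mul_left]
  have hsplit : ∀ k, (q ∣ k * D ∧ (r ∣ k ∨ (q ∣ k * n ∧ s ∣ k))) ↔
      (q ∣ k * D ∧ r ∣ k) ∨ (q ∣ k * gcd n D ∧ s ∣ k) := fun k => by
    rw [← hgcd]; tauto
  have hboth : ∀ k, ((q ∣ k * D ∧ r ∣ k) ∧ (q ∣ k * gcd n D ∧ s ∣ k)) ↔
      q ∣ k * gcd n D ∧ r ∣ k := fun k => by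
    rw [← hgcd]
    exact ⟨fun h => ⟨⟨h.2.1.1, h.1.1⟩, h.1.2⟩, fun h => ⟨⟨h.1.2, h.2⟩, h.1, hsr.trans h.2⟩⟩
  have hincl := card_union_add_card_inter {k ∈ range (r * q) | q ∣ k * D ∧ r ∣ k}
    {k ∈ range (r * q) | q ∣ k * gcd n D ∧ s ∣ k}
  rw [← filter_or, ← filter_and] at hincl
  simp_rw [← hsplit, hboth, card_filter_dvd_mul_and_dvd _ hqr hsr hq hs,
    card_filter_dvd_mul_and_dvd _ hqr dvd_rfl hq hr, Nat.div_self hr] at hincl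
  have hrs : 1 ≤ r / s := (Nat.one_le_div_iff hs).mpr (le_of_dvd hr hsr)
  rw [Nat.mul_sub_one]
  have : gcd q (gcd n D) ≤ gcd q (gcd n D) * (r / s) := Nat.le_mul_of_pos_right _ hrs
  omega

theorem Prime.coprime_pow_sub_one {p : ℕ} (hp : p.Prime) (b : ℕ) : Coprime (p ^ b) (p - 1) :=
  ((coprime_self_sub_right hp.one_le).mpr (coprime_one_right p)).pow_left b

theorem Prime.pow_dvd_iff_le_of_gcd_eq {p m w c k : ℕ} (hp : p.Prime)
    (hw : gcd (p ^ m) k = p ^ w) (hc : c ≤ m) : p ^ c ∣ k ↔ c ≤ w := by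
  rw [← pow_dvd_pow_iff_le_right hp.one_lt, ← hw, dvd_gcd_iff]
  exact ⟨fun h => ⟨pow_dvd_pow p hc, h⟩, And.right⟩

theorem ModEq.eq_of_mem_Icc {a b q : ℕ} (h : a ≡ b [MOD q]) (ha : a ∈ Icc 1 q)
    (hb : b ∈ Icc 1 q) : a = b := by
  rw [mem_Icc] at ha hb
  have := (h.sub ha.1 hb.1 rfl).eq_of_lt_of_lt (by omega) (by omega)
  omega

theorem exists_mem_Icc_modEq (x : ℕ) {q : ℕ} (hq : 0 < q) : ∃ y ∈ Icc 1 q, x ≡ y [MOD q] := by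
  refine ⟨(x + (q - 1)) % q + 1, mem_Icc.mpr ⟨by omega, mod_lt _ hq⟩, ?_⟩
  calc x ≡ x + q [MOD q] := add_modEq_right.symm
    _ = x + (q - 1) + 1 := by omega
    _ ≡ (x + (q - 1)) % q + 1 [MOD q] := (mod_modEq _ q).symm.add_right 1

end Nat

namespace ZMod

theorem orderOf_unitsMap_of_forall_mem_zpowers {m M : ℕ} [NeZero M] (hmM : m ∣ M)
    {γ : (ZMod M)ˣ} (hγ : ∀ u, u ∈ Subgroup.zpowers γ) :
    orderOf (unitsMap hmM γ) = m.totient := by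
  have : NeZero m := ⟨fun h => NeZero.ne M (Nat.eq_zero_of_zero_dvd (h ▸ hmM))⟩
  rw [orderOf_eq_card_of_forall_mem_zpowers, Nat.card_eq_fintype_card, card_units_eq_totient]
  intro u
  obtain ⟨v, rfl⟩ := unitsMap_surjective hmM u
  rw [← MonoidHom.map_zpowers]
  exact Subgroup.mem_map_of_mem _ (hγ v)

theorem dvd_pow_sub_one_iff_totient_dvd {m M : ℕ} [NeZero M] (hmM : m ∣ M)
    {γ : (ZMod M)ˣ} (hγ : ∀ u, u ∈ Subgroup.zpowers γ) {x k : ℕ} (n : ℕ) (hx : 0 < x)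
    (hxk : (x : ZMod M) = γ ^ k) :
    m ∣ x ^ n - 1 ↔ m.totient ∣ k * n := by
  have hxm : (x : ZMod m) = (unitsMap hmM γ ^ k : (ZMod m)ˣ) := by
    rw [Units.val_pow_eq_pow_val, unitsMap_val, ← cast_pow hmM, ← hxk, cast_natCast hmM]
  rw [← orderOf_unitsMap_of_forall_mem_zpowers hmM hγ, orderOf_dvd_iff_pow_eq_one, pow_mul,
    ← Units.val_inj, Units.val_pow_eq_pow_val, ← hxm, Units.val_one, ← natCast_eq_zero_iff,
    Nat.cast_sub (Nat.one_le_pow _ _ hx), sub_eq_zero]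
  push_cast; rfl

end ZMod

theorem card_filter_Icc_coprime_eq_card_filter_range_product {M q : ℕ} (hM : 1 < M) (hq : 0 < q)
    (hMq : M.Coprime q) {γ : (ZMod M)ˣ} (hγ : ∀ u, u ∈ Subgroup.zpowers γ)
    (P : ℕ → Prop) [DecidablePred P] (Q : ℕ × ℕ → Prop) [DecidablePred Q]
    (hPQ : ∀ x k y : ℕ, 0 < x → 0 < y → (x : ZMod M) = γ ^ k → x ≡ y [MOD q] → (P x ↔ Q (k, y))) :
    #{x ∈ Icc 1 (M * q) | x.Coprime M ∧ P x} =
      #{ky ∈ range M.totient ×ˢ Icc 1 q | Q ky} := by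
  have : Fact (1 < M) := ⟨hM⟩
  have hord : orderOf γ = M.totient := by
    rw [orderOf_eq_card_of_forall_mem_zpowers hγ, Nat.card_eq_fintype_card,
      ZMod.card_units_eq_totient]
  let X : ℕ × ℕ → ℕ := fun ky => Nat.chineseRemainder hMq ((γ : ZMod M) ^ ky.1).val ky.2
  have hXM (ky : ℕ × ℕ) : (X ky : ZMod M) = γ ^ ky.1 := by
    rw [(ZMod.natCast_eq_natCast_iff _ _ M).mpr (Nat.chineseRemainder hMq _ _).2.1,
      ZMod.natCast_zmod_val]
  have hXq (ky : ℕ × ℕ) : X ky ≡ ky.2 [MOD q] := (Nat.chineseRemainder hMq _ _).2.2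
  have hXmem (ky : ℕ × ℕ) : X ky ∈ Icc 1 (M * q) := by
    refine mem_Icc.mpr ⟨Nat.pos_of_ne_zero fun h0 => ?_,
      (Nat.chineseRemainder_lt_mul hMq _ _ (by omega) (by omega)).le⟩
    have hunit := (γ ^ ky.1).isUnit
    rw [Units.val_pow_eq_pow_val, ← hXM, h0, Nat.cast_zero] at hunit
    exact not_isUnit_zero hunit
  symm
  refine card_bij (fun ky _ => X ky) ?_ ?_ ?_
  · intro ky hky
    simp only [mem_filter, mem_product, mem_range] at hky ⊢
    refine ⟨hXmem ky, (ZMod.isUnit_iff_coprime _ M).mp (hXM ky ▸ (γ ^ ky.1).isUnit), ?_⟩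
    exact (hPQ _ _ _ (mem_Icc.mp (hXmem ky)).1 (mem_Icc.mp hky.1.2).1 (hXM ky) (hXq ky)).mpr hky.2
  · rintro ⟨k, y⟩ hky ⟨k', y'⟩ hky' hXX
    simp only [mem_filter, mem_product, mem_range] at hky hky'
    have hkk : k = k' := by
      refine pow_injOn_Iio_orderOf (x := γ) (hord ▸ hky.1.1) (hord ▸ hky'.1.1) ?_
      have h := congrArg (Nat.cast : ℕ → ZMod M) hXX
      rw [hXM, hXM] at h
      exact Units.val_injective (by simpa only [Units.val_pow_eq_pow_val] using h)
    have hyy : y = y' :=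
      ((hXq (k, y)).symm.trans (hXX ▸ hXq (k', y'))).eq_of_mem_Icc hky.1.2 hky'.1.2
    rw [hkk, hyy]
  · intro x hx
    simp only [mem_filter] at hx
    obtain ⟨hxI, hxM, hP⟩ := hx
    have hu := (ZMod.isUnit_iff_coprime x M).mpr hxM
    have hpow : hu.unit ∈ Submonoid.powers γ := mem_powers_iff_mem_zpowers.mpr (hγ hu.unit)
    obtain ⟨k, hk, hγk⟩ := mem_image.mp (mem_powers_iff_mem_range_orderOf.mp hpow)
    obtain ⟨y, hy, hxy⟩ := Nat.exists_mem_Icc_modEq x hq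
    have hxk : (x : ZMod M) = γ ^ k := by rw [← Units.val_pow_eq_pow_val, hγk, IsUnit.unit_spec]
    refine ⟨(k, y), ?_, ?_⟩
    · simp only [mem_filter, mem_product, mem_range]
      exact ⟨⟨hord ▸ mem_range.mp hk, hy⟩,
        (hPQ x k y (mem_Icc.mp hxI).1 (mem_Icc.mp hy).1 hxk hxy).mp hP⟩
    · have hxX := Nat.chineseRemainder_modEq_unique hMq
        ((ZMod.natCast_eq_natCast_iff _ _ M).mp (hxk.trans (ZMod.natCast_zmod_val _).symm)) hxy
      exact hxX.symm.eq_of_mem_Icc (hXmem (k, y)) hxI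

theorem prime_pow_dvd_mul_pow_sub_one_iff {p e n : ℕ} (hp : p.Prime) (hpn : ¬ p ∣ n)
    {γ : (ZMod (p ^ e))ˣ} (hγ : ∀ u, u ∈ Subgroup.zpowers γ) {x k : ℕ} (hx : 0 < x)
    (hxk : (x : ZMod (p ^ e)) = γ ^ k) :
    p ^ (e - 1) ∣ k * (x ^ n - 1) ↔
      p ^ (e - 1) ∣ k ∨ ((p - 1) ∣ k * n ∧ p ^ (e - 1 - e / 2) ∣ k) := by
  have : NeZero (p ^ e) := ⟨pow_ne_zero e hp.ne_zero⟩
  obtain ⟨w, hwe, hw⟩ := (Nat.dvd_prime_pow hp).mp (Nat.gcd_dvd_left (p ^ (e - 1)) k)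
  have hdvd_iff := fun c => hp.pow_dvd_iff_le_of_gcd_eq (c := c) hw
  rw [Nat.dvd_mul_iff_div_gcd_dvd (pow_pos hp.pos _), hw, Nat.pow_div hwe hp.pos,
    hdvd_iff _ le_rfl, hdvd_iff _ (by omega)]
  obtain hwe' | hwe' := hwe.eq_or_lt
  · simp [hwe']
  obtain ⟨b, hb⟩ : ∃ b, e - 1 - w = b + 1 := ⟨e - 1 - w - 1, by omega⟩
  rw [ZMod.dvd_pow_sub_one_iff_totient_dvd (pow_dvd_pow p (by omega)) hγ n hx hxk, hb,
    Nat.totient_prime_pow_succ hp, ← (hp.coprime_pow_sub_one b).lcm_eq_mul, Nat.lcm_dvd_iff,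
    ((hp.coprime_iff_not_dvd.mpr hpn).pow_left b).dvd_mul_right, hdvd_iff _ (by omega)]
  have hb' : b ≤ w ↔ e - 1 - e / 2 ≤ w := by omega
  rw [hb', and_comm, or_iff_right (by omega)]

theorem natCast_pow_pow_eq_self_iff {p e n : ℕ} (hp : p.Prime) (hpn : ¬ p ∣ n) (he : 1 ≤ e)
    {γ : (ZMod (p ^ e))ˣ} (hγ : ∀ u, u ∈ Subgroup.zpowers γ) {x k y : ℕ} (hx : 0 < x) (hy : 0 < y)
    (hxk : (x : ZMod (p ^ e)) = γ ^ k) (hxy : x ≡ y [MOD p - 1]) :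
    (x : ZMod (p ^ e)) ^ x ^ n = x ↔
      (p - 1) ∣ k * (y ^ n - 1) ∧
        (p ^ (e - 1) ∣ k ∨ ((p - 1) ∣ k * n ∧ p ^ (e - 1 - e / 2) ∣ k)) := by
  have hpow : ∀ z : ℕ, 0 < z → 1 ≤ z ^ n := fun z hz => Nat.one_le_pow _ _ hz
  have hunit : (x : ZMod (p ^ e)) ^ x ^ n = x ↔ γ ^ (k * (x ^ n - 1)) = 1 := by
    rw [hxk, ← Units.val_pow_eq_pow_val, ← Units.val_pow_eq_pow_val, Units.val_inj, pow_mul,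
      ← Nat.sub_add_cancel (hpow x hx), pow_succ, mul_eq_right, Nat.add_sub_cancel]
  have hmod : k * (x ^ n - 1) ≡ k * (y ^ n - 1) [MOD p - 1] :=
    ((hxy.pow n).sub (hpow x hx) (hpow y hy) rfl).mul_left k
  have : NeZero (p ^ e) := ⟨pow_ne_zero e hp.ne_zero⟩
  rw [hunit, ← orderOf_dvd_iff_pow_eq_one, orderOf_eq_card_of_forall_mem_zpowers hγ,
    Nat.card_eq_fintype_card, ZMod.card_units_eq_totient, Nat.totient_prime_pow hp he,
    ← (hp.coprime_pow_sub_one _).lcm_eq_mul, Nat.lcm_dvd_iff, hmod.dvd_iff dvd_rfl,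
    prime_pow_dvd_mul_pow_sub_one_iff hp hpn hγ hx hxk, and_comm]

theorem stmt_8_general (p n e : ℕ) [Fact p.Prime] (hp2 : p ≠ 2)
    (hpn : ¬ p ∣ n) (he : 1 ≤ e) :
    ((Finset.Icc 1 (p ^ e * (p - 1))).filter fun x : ℕ =>
        ¬ p ∣ x ∧ (x : ZMod (p ^ e)) ^ (x ^ n) = (x : ZMod (p ^ e))).card =
      (∑ x0 ∈ Finset.Icc 1 (p - 1), Nat.gcd (p - 1) (x0 ^ n - 1)) +
      (∑ x0 ∈ Finset.Icc 1 (p - 1), Nat.gcd (p - 1) (Nat.gcd n (x0 ^ n - 1))) *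
        (p ^ (e / 2) - 1) := by
  have hp : p.Prime := Fact.out
  have hq : 0 < p - 1 := Nat.sub_pos_of_lt hp.one_lt
  obtain ⟨γ, hγ⟩ := (ZMod.isCyclic_units_of_prime_pow p hp hp2 e).exists_generator
  have hcop (x : ℕ) : ¬ p ∣ x ↔ x.Coprime (p ^ e) := by
    rw [Nat.coprime_pow_right_iff he, Nat.coprime_comm, hp.coprime_iff_not_dvd]
  simp_rw [hcop]
  rw [card_filter_Icc_coprime_eq_card_filter_range_product (Nat.one_lt_pow (by omega) hp.one_lt) hq
      (hp.coprime_pow_sub_one e) hγ _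
      (fun ky => (p - 1) ∣ ky.1 * (ky.2 ^ n - 1) ∧
        (p ^ (e - 1) ∣ ky.1 ∨ ((p - 1) ∣ ky.1 * n ∧ p ^ (e - 1 - e / 2) ∣ ky.1)))
      (fun x k y hx hy hxk hxy => natCast_pow_pow_eq_self_iff hp hpn he hγ hx hy hxk hxy),
    card_filter, sum_product_right, Nat.totient_prime_pow hp he]
  simp_rw [← card_filter, Nat.card_filter_dvd_mul_and_or n _ (hp.coprime_pow_sub_one _).symm
    (pow_dvd_pow p (Nat.sub_le _ _)) hq (pow_pos hp.pos _), Nat.pow_div (Nat.sub_le _ _) hp.pos,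
    show e - 1 - (e - 1 - e / 2) = e / 2 by omega]
  rw [sum_add_distrib, sum_mul]

theorem stmt_8 (p n e : ℕ) [Fact p.Prime] (hp2 : p ≠ 2) (hn : 0 < n)
    (hpn : ¬ p ∣ n) (he : 1 ≤ e) :
    ((Finset.Icc 1 (p ^ e * (p - 1))).filter fun x : ℕ =>
        ¬ p ∣ x ∧ (x : ZMod (p ^ e)) ^ (x ^ n) = (x : ZMod (p ^ e))).card =
      (∑ x0 ∈ Finset.Icc 1 (p - 1), Nat.gcd (p - 1) (x0 ^ n - 1)) +
      (∑ x0 ∈ Finset.Icc 1 (p - 1), Nat.gcd (p - 1) (Nat.gcd n (x0 ^ n - 1))) *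
        (p ^ (e / 2) - 1) :=
  stmt_8_general p n e hp2 hpn he
end

section
/- Let p be an odd prime. The number of solutions x with 1 ≤ x ≤ p^e(p-1), p ∤ x, to x^x ≡ x (mod p^e) equals Σ_{x0=1}^{p-1} gcd(p-1, x0−1) + (p-1)·(p^⌊e/2⌋ − 1). -/
/-!
For `p ∤ x` write `v` for the unit `x mod p^e` and `y = x - 1`; then `x^x ≡ x` says `v^y = 1`.
The group `(ℤ/p^e)ˣ` is cyclic of order `p^(e-1) (p-1)`, so its reduction-mod-`p^t` kernel is
`{v | v^(p^(e-t)) = 1}`. If `v^(p-1) = 1`, only `y mod (p-1)` matters, and counting pairs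
`(v, y mod (p-1))` gives `∑ gcd(p-1, k)`. Otherwise `v^y = 1` forces `p ∣ y`, so `ord v = p^j`,
and `p^j ∣ y` then says `v ≡ 1 (mod p^j)`, i.e. `j ≤ e - j`; conversely each of the
`p^⌊e/2⌋ - 1` elements `v ≠ 1` with `v^(p^⌊e/2⌋) = 1` is `≡ 1 (mod p^⌊e/2⌋)` and solves the
equation for every `y`, i.e. for all `p - 1` residues of `x` modulo `p - 1` (CRT).
-/

open Finset

section Cyclic

variable {G : Type*} [Group G] [Fintype G] [IsCyclic G]

theorem IsCyclic.card_pow_eq_one_of_dvd [DecidableEq G] {d : ℕ} (hd : d ∣ Fintype.card G) :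
    #{g : G | g ^ d = 1} = d := by
  have hd0 : d ≠ 0 := by
    rintro rfl
    exact Fintype.card_ne_zero (Nat.eq_zero_of_zero_dvd hd)
  rw [← sum_card_orderOf_eq_card_pow_eq_one hd0]
  conv_rhs => rw [← Nat.sum_totient d]
  exact sum_congr rfl fun m hm =>
    IsCyclic.card_orderOf_eq_totient ((Nat.dvd_of_mem_divisors hm).trans hd)

theorem IsCyclic.mem_subgroup_iff_pow_card_eq_one (H : Subgroup G) {g : G} :
    g ∈ H ↔ g ^ Nat.card H = 1 := by
  classical
  have pow_card_eq_one {x : G} (hx : x ∈ H) : x ^ Nat.card H = 1 :=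
    orderOf_dvd_iff_pow_eq_one.mp (H.orderOf_dvd_natCard hx)
  refine ⟨pow_card_eq_one, fun hg => ?_⟩
  set S : Finset G := {g : G | g ^ Nat.card H = 1}
  have hsub : (H : Set G).toFinset ⊆ S := fun x hx => by
    simpa [S] using pow_card_eq_one (by simpa using hx)
  have hcard : #S ≤ #(H : Set G).toFinset := by
    rw [Set.toFinset_card, ← Nat.card_eq_fintype_card]
    refine (IsCyclic.card_pow_eq_one_of_dvd ?_).le
    rw [← Nat.card_eq_fintype_card]
    exact H.card_subgroup_dvd_card
  have hgS : g ∈ S := by simpa [S] using hg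
  simpa [← eq_of_subset_of_card_le hsub hcard] using hgS

end Cyclic

theorem Nat.pow_coprime_sub_one {p : ℕ} (hp : 1 ≤ p) (k : ℕ) : (p ^ k).Coprime (p - 1) :=
  Nat.Coprime.pow_left _ ((Nat.coprime_self_sub_right hp).mpr (Nat.coprime_one_right p))

theorem card_filter_Icc_one_eq (n : ℕ) (P : ℕ → Prop) [DecidablePred P] :
    #{x ∈ Icc 1 n | P x} = #{y ∈ range n | P (y + 1)} := by
  rw [← Ico_add_one_right_eq_Icc, ← zero_add 1, ← map_add_right_Ico, filter_map, card_map,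
    range_eq_Ico]
  rfl

theorem card_filter_range_mul_eq {m n : ℕ} [NeZero m] (hmn : m.Coprime n) (hn : n ≠ 0)
    (P : ZMod m → ℕ → Prop) [∀ a k, Decidable (P a k)] :
    #{y ∈ range (m * n) | P ((y : ℕ) : ZMod m) (y % n)} =
      #{q ∈ (univ : Finset (ZMod m)) ×ˢ range n | P q.1 q.2} := by
  refine card_nbij (fun y => ((y : ZMod m), y % n)) ?_ ?_ ?_
  · intro y hy
    simp only [mem_coe, mem_filter, mem_range, mem_product, mem_univ, true_and] at hy ⊢
    exact ⟨Nat.mod_lt _ (Nat.pos_of_ne_zero hn), hy.2⟩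
  · intro y hy y' hy' h
    simp only [mem_coe, mem_filter, mem_range, Prod.mk.injEq] at hy hy' h
    have hmod : y ≡ y' [MOD m * n] := (Nat.modEq_and_modEq_iff_modEq_mul hmn).mp
      ⟨(ZMod.natCast_eq_natCast_iff _ _ _).mp h.1, h.2⟩
    exact hmod.eq_of_lt_of_lt hy.1 hy'.1
  · rintro ⟨a, k⟩ hq
    simp only [mem_coe, mem_filter, mem_product, mem_univ, mem_range, true_and] at hq
    let z := Nat.chineseRemainder hmn a.val k
    have hza : (z : ZMod m) = a := by
      rw [(ZMod.natCast_eq_natCast_iff _ _ _).mpr z.prop.1, ZMod.natCast_zmod_val]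
    have hzk : z % n = k := Eq.trans z.prop.2 (Nat.mod_eq_of_lt hq.1)
    refine ⟨z, ?_, by simp only [hza, hzk]⟩
    simp only [mem_coe, mem_filter, mem_range, hza, hzk]
    exact ⟨Nat.chineseRemainder_lt_mul hmn _ _ (NeZero.ne m) hn, hq.2⟩

theorem card_filter_exists_unit_eq {m : ℕ} [NeZero m] (s : Finset ℕ) (P : (ZMod m)ˣ → ℕ → Prop)
    [∀ v k, Decidable (P v k)] :
    #{q ∈ (univ : Finset (ZMod m)) ×ˢ s | ∃ v : (ZMod m)ˣ, (v : ZMod m) = q.1 + 1 ∧ P v q.2} =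
      #{q ∈ (univ : Finset (ZMod m)ˣ) ×ˢ s | P q.1 q.2} := by
  symm
  refine card_nbij (fun q => ((q.1 : ZMod m) - 1, q.2)) ?_ ?_ ?_
  · intro q hq
    simp only [mem_coe, mem_filter, mem_product, mem_univ, true_and] at hq ⊢
    exact ⟨hq.1, q.1, by ring, hq.2⟩
  · rintro ⟨v, k⟩ - ⟨v', k'⟩ - h
    simp only [Prod.mk.injEq, sub_left_inj] at h
    rw [Units.val_inj.mp h.1, h.2]
  · rintro ⟨a, k⟩ hq
    simp only [mem_coe, mem_filter, mem_product, mem_univ, true_and] at hq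
    obtain ⟨hk, v, hv, hP⟩ := hq
    exact ⟨(v, k), by simpa using ⟨hk, hP⟩, by simp [hv]⟩

/-- The pair `(v, k)` stands for the residues `x ≡ v (mod p^e)`, `x - 1 ≡ k (mod p - 1)`; by
`pow_eq_one_iff_selfPowerFixed`, the predicate says that these `x` solve `x^x ≡ x (mod p^e)`. -/
abbrev SelfPowerFixed (p e : ℕ) (v : (ZMod (p ^ e))ˣ) (k : ℕ) : Prop :=
  (v ^ (p - 1) = 1 ∧ v ^ k = 1) ∨ (v ^ (p - 1) ≠ 1 ∧ v ^ p ^ (e / 2) = 1)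

section PrimePowerUnits

variable {p e : ℕ} [hp : Fact p.Prime]

theorem card_units_zmod_prime_pow (he : 1 ≤ e) :
    Fintype.card (ZMod (p ^ e))ˣ = p ^ (e - 1) * (p - 1) := by
  rw [ZMod.card_units_eq_totient, Nat.totient_prime_pow hp.out he]

theorem isUnit_natCast_zmod_prime_pow_iff (he : 1 ≤ e) (n : ℕ) :
    IsUnit (n : ZMod (p ^ e)) ↔ ¬ p ∣ n := by
  rw [ZMod.isUnit_iff_coprime, Nat.coprime_pow_right_iff he, Nat.coprime_comm,
    hp.out.coprime_iff_not_dvd]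

theorem card_ker_unitsMap_prime_pow {t : ℕ} (ht : 1 ≤ t) (hte : t ≤ e) :
    Nat.card (ZMod.unitsMap (pow_dvd_pow p hte)).ker = p ^ (e - t) := by
  have h := Subgroup.card_mul_index (ZMod.unitsMap (pow_dvd_pow p hte)).ker
  rw [Subgroup.index_ker, MonoidHom.range_eq_top.mpr (ZMod.unitsMap_surjective _),
    Subgroup.card_top, Nat.card_eq_fintype_card (α := (ZMod (p ^ t))ˣ),
    Nat.card_eq_fintype_card (α := (ZMod (p ^ e))ˣ),
    card_units_zmod_prime_pow ht, card_units_zmod_prime_pow (ht.trans hte)] at h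
  have hsplit : p ^ (e - 1) * (p - 1) = p ^ (e - t) * (p ^ (t - 1) * (p - 1)) := by
    rw [← mul_assoc, ← pow_add]
    congr 2
    omega
  have hpos : 0 < p ^ (t - 1) * (p - 1) :=
    Nat.mul_pos (pow_pos hp.out.pos _) (Nat.sub_pos_of_lt hp.out.one_lt)
  exact Nat.eq_of_mul_eq_mul_right hpos (h.trans hsplit)

theorem pow_prime_pow_sub_eq_one_iff_dvd (hp2 : p ≠ 2) {t : ℕ} (ht : 1 ≤ t) (hte : t ≤ e)
    {v : (ZMod (p ^ e))ˣ} {y : ℕ} (hv : (v : ZMod (p ^ e)) = y + 1) :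
    v ^ p ^ (e - t) = 1 ↔ p ^ t ∣ y := by
  have := ZMod.isCyclic_units_of_prime_pow p hp.out hp2 e
  rw [← card_ker_unitsMap_prime_pow ht hte, ← IsCyclic.mem_subgroup_iff_pow_card_eq_one,
    MonoidHom.mem_ker, Units.ext_iff, ZMod.unitsMap_val, hv, Units.val_one,
    ZMod.cast_add (pow_dvd_pow p hte), ZMod.cast_natCast (pow_dvd_pow p hte),
    ZMod.cast_one (pow_dvd_pow p hte), add_eq_right, ZMod.natCast_eq_zero_iff]

theorem pow_eq_one_of_pow_prime_pow_half_eq_one (hp2 : p ≠ 2) {v : (ZMod (p ^ e))ˣ} {y : ℕ}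
    (hv : (v : ZMod (p ^ e)) = y + 1) (h : v ^ p ^ (e / 2) = 1) : v ^ y = 1 := by
  have hdvd : p ^ (e / 2) ∣ y := by
    rcases Nat.eq_zero_or_pos (e / 2) with h0 | hpos
    · simp [h0]
    · refine (pow_prime_pow_sub_eq_one_iff_dvd hp2 hpos (by omega) hv).mp ?_
      obtain ⟨c, hc⟩ := pow_dvd_pow p (show e / 2 ≤ e - e / 2 by omega)
      rw [hc, pow_mul, h, one_pow]
  obtain ⟨c, rfl⟩ := hdvd
  rw [pow_mul, h, one_pow]

theorem pow_prime_pow_half_eq_one_of_pow_eq_one (hp2 : p ≠ 2) (he : 1 ≤ e)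
    {v : (ZMod (p ^ e))ˣ} {y : ℕ} (hv : (v : ZMod (p ^ e)) = y + 1) (hy : v ^ y = 1)
    (hv1 : v ^ (p - 1) ≠ 1) : v ^ p ^ (e / 2) = 1 := by
  have hpy : p ∣ y := by
    by_contra hpy
    refine hv1 (orderOf_dvd_iff_pow_eq_one.mp ?_)
    have hcop : (y.gcd (p ^ (e - 1) * (p - 1))).Coprime (p ^ (e - 1)) :=
      Nat.Coprime.coprime_dvd_left (Nat.gcd_dvd_left _ _)
        (Nat.Coprime.pow_right _ ((Nat.coprime_comm.mp (hp.out.coprime_iff_not_dvd.mpr hpy))))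
    have hgcd : v ^ y.gcd (p ^ (e - 1) * (p - 1)) = 1 :=
      pow_gcd_eq_one.mpr ⟨hy, card_units_zmod_prime_pow (p := p) he ▸ pow_card_eq_one⟩
    exact (orderOf_dvd_of_pow_eq_one hgcd).trans (hcop.dvd_of_dvd_mul_left (Nat.gcd_dvd_right _ _))
  obtain ⟨j, hje, hord⟩ : ∃ j ≤ e - 1, orderOf v = p ^ j :=
    (Nat.dvd_prime_pow hp.out).mp <| orderOf_dvd_of_pow_eq_one <|
      (pow_prime_pow_sub_eq_one_iff_dvd hp2 le_rfl he hv).mpr (by simpa using hpy)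
  suffices j ≤ e / 2 from orderOf_dvd_iff_pow_eq_one.mp (hord ▸ pow_dvd_pow p this)
  rcases Nat.eq_zero_or_pos j with rfl | hj
  · exact Nat.zero_le _
  have hvj : v ^ p ^ (e - j) = 1 :=
    (pow_prime_pow_sub_eq_one_iff_dvd hp2 hj (by omega) hv).mpr
      (hord ▸ orderOf_dvd_of_pow_eq_one hy)
  have := (Nat.pow_dvd_pow_iff_le_right hp.out.one_lt).mp (hord ▸ orderOf_dvd_of_pow_eq_one hvj)
  omega

theorem pow_eq_one_iff_selfPowerFixed (hp2 : p ≠ 2) (he : 1 ≤ e) {v : (ZMod (p ^ e))ˣ}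
    {y : ℕ} (hv : (v : ZMod (p ^ e)) = y + 1) :
    v ^ y = 1 ↔ SelfPowerFixed p e v (y % (p - 1)) := by
  by_cases hv1 : v ^ (p - 1) = 1
  · simp [SelfPowerFixed, hv1, ← pow_eq_pow_mod y hv1]
  · simp only [SelfPowerFixed, hv1, false_and, ne_eq, not_false_eq_true, true_and, false_or]
    exact ⟨fun hy => pow_prime_pow_half_eq_one_of_pow_eq_one hp2 he hv hy hv1,
      pow_eq_one_of_pow_prime_pow_half_eq_one hp2 hv⟩

theorem not_dvd_and_pow_self_eq_self_iff (hp2 : p ≠ 2) (he : 1 ≤ e) (y : ℕ) :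
    (¬ p ∣ y + 1 ∧ ((y + 1 : ℕ) : ZMod (p ^ e)) ^ (y + 1) = ((y + 1 : ℕ) : ZMod (p ^ e))) ↔
      ∃ v : (ZMod (p ^ e))ˣ, (v : ZMod (p ^ e)) = y + 1 ∧ SelfPowerFixed p e v (y % (p - 1)) := by
  rw [← isUnit_natCast_zmod_prime_pow_iff he, Nat.cast_succ]
  constructor
  · rintro ⟨⟨v, hv⟩, hfix⟩
    rw [← hv, ← Units.val_pow_eq_pow_val, Units.val_inj, pow_succ, mul_eq_right] at hfix
    exact ⟨v, hv, (pow_eq_one_iff_selfPowerFixed hp2 he hv).mp hfix⟩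
  · rintro ⟨v, hv, hfix⟩
    rw [← hv, ← Units.val_pow_eq_pow_val, Units.val_inj, pow_succ, mul_eq_right]
    exact ⟨v.isUnit, (pow_eq_one_iff_selfPowerFixed hp2 he hv).mpr hfix⟩

theorem card_selfPowerFixed (hp2 : p ≠ 2) (he : 1 ≤ e) :
    #{q ∈ (univ : Finset (ZMod (p ^ e))ˣ) ×ˢ range (p - 1) | SelfPowerFixed p e q.1 q.2} =
      (∑ k ∈ range (p - 1), (p - 1).gcd k) + (p - 1) * (p ^ (e / 2) - 1) := by
  have := ZMod.isCyclic_units_of_prime_pow p hp.out hp2 e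
  have hcount {d : ℕ} (hd : d ∣ p ^ (e - 1) * (p - 1)) : #{v : (ZMod (p ^ e))ˣ | v ^ d = 1} = d :=
    IsCyclic.card_pow_eq_one_of_dvd (card_units_zmod_prime_pow (p := p) he ▸ hd)
  simp only [SelfPowerFixed]
  rw [filter_or, card_union_of_disjoint (disjoint_filter.mpr fun q _ h1 h2 => h2.1 h1.1)]
  congr 1
  · rw [card_filter, sum_product_right]
    refine sum_congr rfl fun k _ => ?_
    rw [← card_filter]
    simp_rw [← pow_gcd_eq_one]
    exact hcount ((Nat.gcd_dvd_left _ _).trans (dvd_mul_left _ _))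
  · rw [card_filter, sum_product_right]
    simp only [← card_filter, sum_const, card_range, smul_eq_mul]
    congr 1
    have htors : #{v : (ZMod (p ^ e))ˣ | v ^ p ^ (e / 2) = 1} = p ^ (e / 2) :=
      hcount (Dvd.dvd.mul_right (pow_dvd_pow p (by omega)) _)
    have hone : #{v : (ZMod (p ^ e))ˣ | v ^ p ^ (e / 2) = 1 ∧ v ^ (p - 1) = 1} = 1 := by
      simp_rw [← pow_gcd_eq_one, (Nat.pow_coprime_sub_one hp.out.one_le _).gcd_eq_one, pow_one,
        filter_eq', mem_univ, if_true, card_singleton]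
    have hsplit := card_filter_add_card_filter_not
      (s := ({v : (ZMod (p ^ e))ˣ | v ^ p ^ (e / 2) = 1} : Finset _)) (fun v => v ^ (p - 1) = 1)
    simp only [filter_filter, htors, hone] at hsplit
    calc #{v : (ZMod (p ^ e))ˣ | v ^ (p - 1) ≠ 1 ∧ v ^ p ^ (e / 2) = 1}
        = #{v : (ZMod (p ^ e))ˣ | v ^ p ^ (e / 2) = 1 ∧ ¬ v ^ (p - 1) = 1} := by
          simp only [ne_eq, and_comm]
      _ = p ^ (e / 2) - 1 := by omega

end PrimePowerUnits

theorem stmt_9 (p e : ℕ) [Fact p.Prime] (hp2 : p ≠ 2) (he : 1 ≤ e) :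
    ((Finset.Icc 1 (p ^ e * (p - 1))).filter fun x : ℕ =>
        ¬ p ∣ x ∧ (x : ZMod (p ^ e)) ^ x = (x : ZMod (p ^ e))).card =
      (∑ x0 ∈ Finset.Icc 1 (p - 1), Nat.gcd (p - 1) (x0 - 1)) +
      (p - 1) * (p ^ (e / 2) - 1) := by
  have hp := (Fact.out : p.Prime)
  have hsum : ∑ x0 ∈ Icc 1 (p - 1), (p - 1).gcd (x0 - 1) = ∑ k ∈ range (p - 1), (p - 1).gcd k := by
    rw [← Ico_add_one_right_eq_Icc, sum_Ico_eq_sum_range]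
    simp
  calc _ = #{y ∈ range (p ^ e * (p - 1)) |
          ¬ p ∣ y + 1 ∧ ((y + 1 : ℕ) : ZMod (p ^ e)) ^ (y + 1) = ((y + 1 : ℕ) : ZMod (p ^ e))} :=
        card_filter_Icc_one_eq _ _
    _ = #{y ∈ range (p ^ e * (p - 1)) | ∃ v : (ZMod (p ^ e))ˣ,
          (v : ZMod (p ^ e)) = ((y : ℕ) : ZMod (p ^ e)) + 1 ∧ SelfPowerFixed p e v (y % (p - 1))} :=
        congrArg card (filter_congr fun y _ => not_dvd_and_pow_self_eq_self_iff hp2 he y)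
    _ = #{q ∈ (univ : Finset (ZMod (p ^ e))) ×ˢ range (p - 1) | ∃ v : (ZMod (p ^ e))ˣ,
          (v : ZMod (p ^ e)) = q.1 + 1 ∧ SelfPowerFixed p e v q.2} :=
        card_filter_range_mul_eq (Nat.pow_coprime_sub_one hp.one_le e)
          (Nat.sub_pos_of_lt hp.one_lt).ne'
          (fun a k => ∃ v : (ZMod (p ^ e))ˣ, (v : ZMod (p ^ e)) = a + 1 ∧ SelfPowerFixed p e v k)
    _ = #{q ∈ (univ : Finset (ZMod (p ^ e))ˣ) ×ˢ range (p - 1) | SelfPowerFixed p e q.1 q.2} :=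
        card_filter_exists_unit_eq _ _
    _ = _ := by rw [card_selfPowerFixed hp2 he, hsum]
end

section
/- Let p = 2 and n an odd positive integer. The number of odd solutions x with 1 ≤ x ≤ 2^e to x^(x^n) ≡ x (mod 2^e) is 2^{e-1} if 1 ≤ e ≤ 3, and 2^⌊e/2⌋ + 2 if e ≥ 4. -/
/-! For odd `x` the unit `x` cancels, so the congruence says `2 ^ e ∣ x ^ (x ^ n - 1) - 1`.
Since `n` is odd, `v₂(x ^ n - 1) = v₂(x - 1)`, and lifting the exponent at `2` gives
`v₂(x ^ (x ^ n - 1) - 1) = 2 v₂(x - 1) + v₂(x + 1) - 1`, where one of `v₂(x ∓ 1)` is `1`.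
Hence for `e ≤ 3` every odd `x` is a solution, while for `e ≥ 4` the solutions are
`x ≡ 1 mod 2 ^ ⌈e/2⌉` and `x ≡ -1 mod 2 ^ (e - 1)`: `2 ^ ⌊e/2⌋` and `2` residues. -/

open Finset

namespace Nat

theorem card_filter_Icc_modEq_of_dvd {r N : ℕ} (hr : 0 < r) (hrN : r ∣ N) (v : ℕ) :
    #{x ∈ Icc 1 N | x ≡ v [MOD r]} = N / r := by
  have hperiodic : Function.Periodic (· ≡ v [MOD r]) N := fun x =>
    propext ⟨((modEq_zero_iff_dvd.2 hrN).add_left x).symm.trans,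
      ((modEq_zero_iff_dvd.2 hrN).add_left x).trans⟩
  rw [← Ico_add_one_right_eq_Icc, add_comm N, filter_Ico_card_eq_of_periodic _ _ _ hperiodic,
    count_modEq_card _ hr, mod_eq_zero_of_dvd hrN]
  simp

theorem card_filter_Icc_dvd_sub_one {r N : ℕ} (hr : 0 < r) (hrN : r ∣ N) :
    #{x ∈ Icc 1 N | r ∣ x - 1} = N / r := by
  rw [← card_filter_Icc_modEq_of_dvd hr hrN 1]
  refine congrArg card (filter_congr fun x hx => ?_)
  rw [ModEq.comm, modEq_iff_dvd' (mem_Icc.1 hx).1]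

theorem card_filter_Icc_dvd_add_one {r N : ℕ} (hr : 0 < r) (hrN : r ∣ N) :
    #{x ∈ Icc 1 N | r ∣ x + 1} = N / r := by
  rw [← card_filter_Icc_modEq_of_dvd hr hrN (r - 1)]
  refine congrArg card (filter_congr fun x _ => ?_)
  rw [modEq_iff_dvd, ← Int.natCast_dvd_natCast, cast_sub hr,
    show (r : ℤ) - (1 : ℕ) - x = r - (x + 1 : ℕ) by push_cast; ring, dvd_sub_right dvd_rfl]

theorem eight_dvd_pow_sub_one_of_odd {x m : ℕ} (hx : Odd x) (hm : Even m) : 8 ∣ x ^ m - 1 := by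
  obtain ⟨k, rfl⟩ := hm
  rw [← two_mul, pow_mul]
  exact (eight_dvd_sq_sub_one_of_odd hx).trans (by simpa using Nat.sub_dvd_pow_sub_pow (x ^ 2) 1 k)

end Nat

theorem ZMod.natCast_pow_eq_self_iff {m x k : ℕ} (hx : x.Coprime m) (hx0 : x ≠ 0)
    (hk : k ≠ 0) :
    (x : ZMod m) ^ k = x ↔ m ∣ x ^ (k - 1) - 1 := by
  obtain ⟨k, rfl⟩ := Nat.exists_eq_succ_of_ne_zero hk
  rw [pow_succ, ((ZMod.isUnit_iff_coprime x m).2 hx).mul_eq_right, Nat.succ_sub_one,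
    ← Nat.cast_pow, ← Nat.cast_one, ZMod.natCast_eq_natCast_iff, Nat.ModEq.comm,
    Nat.modEq_iff_dvd' (Nat.one_le_pow _ _ (Nat.pos_of_ne_zero hx0))]

namespace padicValNat

theorem two_pow_sub_one_of_odd {x n : ℕ} (hx : Odd x) (hn : Odd n) :
    padicValNat 2 (x ^ n - 1) = padicValNat 2 (x - 1) := by
  obtain ⟨y, rfl⟩ : ∃ y, x = y + 1 := ⟨x - 1, by have := hx.pos; omega⟩
  have hsum : Odd (∑ i ∈ range n, (y + 1) ^ i) := by
    rwa [odd_sum_iff_odd_card_odd, filter_true_of_mem fun i _ => hx.pow, card_range]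
  rw [← geom_sum_mul_add, Nat.add_sub_cancel, Nat.add_sub_cancel]
  rcases eq_or_ne y 0 with rfl | hy
  · simp
  rw [padicValNat.mul hsum.pos.ne' hy, eq_zero_of_not_dvd hsum.not_two_dvd_nat, zero_add]

theorem two_pow_pow_sub_one {x n : ℕ} (hx : Odd x) (hx1 : 1 < x) (hn : Odd n) :
    padicValNat 2 (x ^ (x ^ n - 1) - 1) + 1 =
      padicValNat 2 (x + 1) + 2 * padicValNat 2 (x - 1) := by
  have hxn : 1 < x ^ n := Nat.one_lt_pow hn.pos.ne' hx1
  rw [pow_two_sub_one hx1 hx.not_two_dvd_nat (by omega) (Nat.Odd.sub_odd hx.pow odd_one),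
    two_pow_sub_one_of_odd hx hn]
  ring

theorem two_sub_one_eq_one_or_two_add_one_eq_one {x : ℕ} (hx : Odd x) (hx1 : 1 < x) :
    padicValNat 2 (x - 1) = 1 ∨ padicValNat 2 (x + 1) = 1 := by
  have hval_eq_one : ∀ y, y ≠ 0 → 2 ∣ y → ¬4 ∣ y → padicValNat 2 y = 1 := by
    intro y hy h2 h4
    have := (padicValNat_dvd_iff_le (p := 2) hy (n := 1)).1 (by simpa using h2)
    have := mt (padicValNat_dvd_iff_le (p := 2) hy (n := 2)).2 (by simpa using h4)
    omega
  have := Nat.odd_iff.1 hx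
  by_cases h : 4 ∣ x - 1
  · exact .inr (hval_eq_one _ (by omega) (by omega) (by omega))
  · exact .inl (hval_eq_one _ (by omega) (by omega) h)

end padicValNat

theorem two_pow_dvd_pow_pow_sub_one_iff {x n e : ℕ} (hx : Odd x) (hn : Odd n) (he : 4 ≤ e) :
    2 ^ e ∣ x ^ (x ^ n - 1) - 1 ↔ 2 ^ ((e + 1) / 2) ∣ x - 1 ∨ 2 ^ (e - 1) ∣ x + 1 := by
  rcases (Nat.one_le_iff_ne_zero.2 hx.pos.ne').eq_or_lt with rfl | hx1
  · simp
  have hxn : 1 < x ^ n := Nat.one_lt_pow hn.pos.ne' hx1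
  have hval := padicValNat.two_pow_pow_sub_one hx hx1 hn
  have hone := padicValNat.two_sub_one_eq_one_or_two_add_one_eq_one hx hx1
  rw [padicValNat_dvd_iff_le (Nat.sub_ne_zero_of_lt (Nat.one_lt_pow (by omega) hx1)),
    padicValNat_dvd_iff_le (by omega), padicValNat_dvd_iff_le (by omega)]
  omega

theorem natCast_pow_pow_eq_self_iff_two_pow_dvd {x n e : ℕ} (hx : Odd x) :
    (x : ZMod (2 ^ e)) ^ (x ^ n) = x ↔ 2 ^ e ∣ x ^ (x ^ n - 1) - 1 :=
  ZMod.natCast_pow_eq_self_iff (Nat.Coprime.pow_right _ (Nat.coprime_two_right.2 hx)) hx.pos.ne'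
    (pow_pos hx.pos _).ne'

theorem odd_and_natCast_pow_pow_eq_self_iff {x n e : ℕ} (hx : 1 ≤ x) (hn : Odd n)
    (he : 4 ≤ e) :
    (Odd x ∧ (x : ZMod (2 ^ e)) ^ (x ^ n) = x) ↔
      2 ^ ((e + 1) / 2) ∣ x - 1 ∨ 2 ^ (e - 1) ∣ x + 1 := by
  refine ⟨fun ⟨hodd, h⟩ => ?_, fun h => ?_⟩
  · rwa [natCast_pow_pow_eq_self_iff_two_pow_dvd hodd,
      two_pow_dvd_pow_pow_sub_one_iff hodd hn he] at h
  have hodd : Odd x := by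
    have h2 : 2 ∣ x - 1 ∨ 2 ∣ x + 1 :=
      h.imp (dvd_trans (dvd_pow_self 2 (by omega))) (dvd_trans (dvd_pow_self 2 (by omega)))
    rw [Nat.odd_iff]
    omega
  rw [natCast_pow_pow_eq_self_iff_two_pow_dvd hodd, two_pow_dvd_pow_pow_sub_one_iff hodd hn he]
  exact ⟨hodd, h⟩

theorem odd_and_natCast_pow_pow_eq_self_iff_of_le_three {x n e : ℕ} (hx : 1 ≤ x)
    (he : e ≤ 3) :
    (Odd x ∧ (x : ZMod (2 ^ e)) ^ (x ^ n) = x) ↔ 2 ∣ x - 1 := by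
  refine ⟨fun ⟨hodd, _⟩ => ?_, fun h => ?_⟩
  · rw [Nat.odd_iff] at hodd
    omega
  have hodd : Odd x := by
    rw [Nat.odd_iff]
    omega
  refine ⟨hodd, (natCast_pow_pow_eq_self_iff_two_pow_dvd hodd).2 ?_⟩
  exact (pow_dvd_pow 2 he).trans
    (Nat.eight_dvd_pow_sub_one_of_odd hodd (Nat.Odd.sub_odd hodd.pow odd_one))

theorem stmt_10_general (n e : ℕ) (hn : Odd n) (he : 1 ≤ e) :
    (e ≤ 3 →
      ((Finset.Icc 1 (2 ^ e)).filter fun x : ℕ =>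
          Odd x ∧ (x : ZMod (2 ^ e)) ^ (x ^ n) = (x : ZMod (2 ^ e))).card = 2 ^ (e - 1)) ∧
    (4 ≤ e →
      ((Finset.Icc 1 (2 ^ e)).filter fun x : ℕ =>
          Odd x ∧ (x : ZMod (2 ^ e)) ^ (x ^ n) = (x : ZMod (2 ^ e))).card =
        2 ^ (e / 2) + 2) := by
  refine ⟨fun he3 => ?_, fun he4 => ?_⟩
  · rw [filter_congr fun x hx =>
        odd_and_natCast_pow_pow_eq_self_iff_of_le_three (mem_Icc.1 hx).1 he3,
      Nat.card_filter_Icc_dvd_sub_one two_pos (dvd_pow_self 2 (by omega))]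
    simpa using Nat.pow_div he two_pos
  have hdisj : Disjoint {x ∈ Icc 1 (2 ^ e) | 2 ^ ((e + 1) / 2) ∣ x - 1}
      {x ∈ Icc 1 (2 ^ e) | 2 ^ (e - 1) ∣ x + 1} := by
    refine disjoint_filter.2 fun x _ h₁ h₂ => ?_
    have h₁ : 4 ∣ x - 1 := (pow_dvd_pow 2 (by omega : 2 ≤ (e + 1) / 2)).trans h₁
    have h₂ : 4 ∣ x + 1 := (pow_dvd_pow 2 (by omega : 2 ≤ e - 1)).trans h₂
    omega
  rw [filter_congr fun x hx => odd_and_natCast_pow_pow_eq_self_iff (mem_Icc.1 hx).1 hn he4,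
    filter_or, card_union_of_disjoint hdisj,
    Nat.card_filter_Icc_dvd_sub_one (by positivity) (pow_dvd_pow 2 (by omega)),
    Nat.card_filter_Icc_dvd_add_one (by positivity) (pow_dvd_pow 2 (by omega)),
    Nat.pow_div (by omega) two_pos, Nat.pow_div (by omega) two_pos,
    show e - (e + 1) / 2 = e / 2 by omega, show e - (e - 1) = 1 by omega, pow_one]

theorem stmt_10 (n e : ℕ) (hn : Odd n) (hn1 : 0 < n) (he : 1 ≤ e) :
    (e ≤ 3 →
      ((Finset.Icc 1 (2 ^ e)).filter fun x : ℕ =>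
          Odd x ∧ (x : ZMod (2 ^ e)) ^ (x ^ n) = (x : ZMod (2 ^ e))).card = 2 ^ (e - 1)) ∧
    (4 ≤ e →
      ((Finset.Icc 1 (2 ^ e)).filter fun x : ℕ =>
          Odd x ∧ (x : ZMod (2 ^ e)) ^ (x ^ n) = (x : ZMod (2 ^ e))).card =
        2 ^ (e / 2) + 2) :=
  stmt_10_general n e hn he
end

section
/- Let p = 2 and n an even positive integer with 2-adic valuation ℓ = v_2(n). The number of odd solutions x with 1 ≤ x ≤ 2^e to x^(x^n) ≡ x (mod 2^e) is 2^{e-1} if 1 ≤ e ≤ 4+ℓ, and 2^{⌊(e+ℓ)/2⌋+1} if e ≥ 5+ℓ. -/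
/-!
An odd `x` is a unit mod `2 ^ e`, so `x ^ (x ^ n) ≡ x` says `2 ^ e ∣ x ^ (x ^ n - 1) - 1`.
By the 2-adic lifting-the-exponent lemma, `v₂ (x ^ m - 1) = v₂ (x ^ 2 - 1) + v₂ m - 1` for
even `m`; applied to `m = n` and then to `m = x ^ n - 1`, it gives
`v₂ (x ^ (x ^ n - 1) - 1) = 2 v₂ (x ^ 2 - 1) + ℓ - 2` for `x ≠ 1`. Hence `x` is a solution
iff `2 ^ ((e + 3 - ℓ) / 2) ∣ x ^ 2 - 1`. As `8 ∣ x ^ 2 - 1`, all odd `x` are solutions when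
`e ≤ 4 + ℓ`; otherwise, with `c = ⌊(e + 1 - ℓ) / 2⌋ ≥ 2`, `2 ^ (c + 1) ∣ x ^ 2 - 1` means
`x ≡ ±1 (mod 2 ^ c)`: two residue classes with `2 ^ (e - c)` members each in `[1, 2 ^ e]`.
-/

open Finset

lemma card_filter_modEq_Icc {m r : ℕ} (k : ℕ) (hm : 0 < m) (hr : ¬m ∣ r) :
    #{x ∈ Icc 1 (m * k) | x ≡ r [MOD m]} = k := by
  have hr0 : ¬0 ≡ r [MOD m] := fun h => hr (Nat.modEq_zero_iff_dvd.mp h.symm)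
  have hIcc :
      {x ∈ Icc 1 (m * k) | x ≡ r [MOD m]} = {x ∈ range (m * k) | x ≡ r [MOD m]} := by
    ext x
    simp only [mem_filter, mem_Icc, mem_range]
    constructor
    · rintro ⟨⟨-, hxk⟩, hx⟩
      refine ⟨lt_of_le_of_ne hxk ?_, hx⟩
      rintro rfl
      exact hr0 ((Nat.modEq_zero_iff_dvd.mpr (dvd_mul_right m k)).symm.trans hx)
    · rintro ⟨hxk, hx⟩
      refine ⟨⟨Nat.pos_of_ne_zero ?_, hxk.le⟩, hx⟩
      rintro rfl
      exact hr0 hx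
  rw [hIcc, ← Nat.count_eq_card_filter_range, Nat.count_modEq_card _ hm]
  simp [Nat.mul_div_cancel_left k hm]

lemma card_filter_modEq_one_or_neg_one_Icc {c : ℕ} (k : ℕ) (hc : 2 ≤ c) :
    #{x ∈ Icc 1 (2 ^ c * k) | x ≡ 1 [MOD 2 ^ c] ∨ x ≡ 2 ^ c - 1 [MOD 2 ^ c]} = 2 * k := by
  have h4 : 4 ≤ 2 ^ c := by
    calc 4 = 2 ^ 2 := by norm_num
      _ ≤ 2 ^ c := Nat.pow_le_pow_right (by norm_num) hc
  have hdisj : Disjoint {x ∈ Icc 1 (2 ^ c * k) | x ≡ 1 [MOD 2 ^ c]}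
      {x ∈ Icc 1 (2 ^ c * k) | x ≡ 2 ^ c - 1 [MOD 2 ^ c]} := by
    refine disjoint_filter.mpr fun x _ h1 h2 => ?_
    have := h1.symm.trans h2
    rw [Nat.ModEq, Nat.mod_eq_of_lt (by omega), Nat.mod_eq_of_lt (by omega)] at this
    omega
  rw [filter_or, card_union_of_disjoint hdisj, two_mul,
    card_filter_modEq_Icc k (by omega) (Nat.not_dvd_of_pos_of_lt one_pos (by omega)),
    card_filter_modEq_Icc k (by omega) (Nat.not_dvd_of_pos_of_lt (by omega) (by omega))]

lemma modEq_one_or_neg_one_iff {x c : ℕ} (hc : c ≠ 0) :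
    x ≡ 1 [MOD 2 ^ c] ∨ x ≡ 2 ^ c - 1 [MOD 2 ^ c] ↔
      Odd x ∧ (2 ^ c ∣ x - 1 ∨ 2 ^ c ∣ x + 1) := by
  have h2 : 2 ∣ 2 ^ c := dvd_pow_self 2 hc
  have hneg : x ≡ 2 ^ c - 1 [MOD 2 ^ c] ↔ 2 ^ c ∣ x + 1 := by
    rw [← Nat.modEq_zero_iff_dvd]
    have hself : 2 ^ c ≡ 0 [MOD 2 ^ c] := Nat.modEq_zero_iff_dvd.mpr dvd_rfl
    constructor
    · intro h
      have := h.add_right 1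
      rw [Nat.sub_add_cancel Nat.one_le_two_pow] at this
      exact this.trans hself
    · intro h
      apply Nat.ModEq.add_right_cancel' 1
      rw [Nat.sub_add_cancel Nat.one_le_two_pow]
      exact h.trans hself.symm
  constructor
  · rintro (h | h)
    · have hx : Odd x := Nat.odd_iff.mpr (h.of_dvd h2)
      exact ⟨hx, .inl ((Nat.modEq_iff_dvd' hx.pos).mp h.symm)⟩
    · have hx : Odd x := by
        have : Even (x + 1) := even_iff_two_dvd.mpr (h2.trans (hneg.mp h))
        simpa [parity_simps] using this
      exact ⟨hx, .inr (hneg.mp h)⟩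
  · rintro ⟨hx, h | h⟩
    · exact .inl ((Nat.modEq_iff_dvd' hx.pos).mpr h).symm
    · exact .inr (hneg.mpr h)

lemma two_pow_dvd_mul_succ_iff {y : ℕ} (d : ℕ) :
    2 ^ d ∣ y * (y + 1) ↔ 2 ^ d ∣ y ∨ 2 ^ d ∣ y + 1 := by
  refine ⟨fun h => ?_, fun h => h.elim (Dvd.dvd.mul_right · _) (Dvd.dvd.mul_left · _)⟩
  rcases Nat.even_or_odd y with hy | hy
  · exact .inl <| ((Nat.coprime_two_left.mpr hy.add_one).pow_left d).dvd_mul_right.mp h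
  · exact .inr <| ((Nat.coprime_two_left.mpr hy).pow_left d).dvd_mul_left.mp h

lemma two_pow_succ_dvd_sq_sub_one_iff {x : ℕ} (c : ℕ) (hx : Odd x) :
    2 ^ (c + 1) ∣ x ^ 2 - 1 ↔ 2 ^ c ∣ x - 1 ∨ 2 ^ c ∣ x + 1 := by
  obtain ⟨y, rfl⟩ := hx
  have hsq : (2 * y + 1) ^ 2 - 1 = 2 ^ 2 * (y * (y + 1)) := by
    rw [Nat.sub_eq_of_eq_add]; ring
  rw [hsq, show 2 * y + 1 - 1 = 2 * y by omega, show 2 * y + 1 + 1 = 2 * (y + 1) by ring]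
  rcases c with _ | d
  · simp only [pow_zero, one_dvd, or_self, iff_true]
    exact Dvd.dvd.mul_right (by norm_num) _
  rw [show 2 ^ (d + 1 + 1) = 2 ^ 2 * 2 ^ d by ring, pow_succ' 2 d, Nat.mul_dvd_mul_iff_left,
    Nat.mul_dvd_mul_iff_left, Nat.mul_dvd_mul_iff_left, two_pow_dvd_mul_succ_iff] <;> positivity

lemma natCast_pow_succ_eq_self_iff {m x : ℕ} (k : ℕ) (hx : x.Coprime m) :
    (x : ZMod m) ^ (k + 1) = x ↔ x ^ k ≡ 1 [MOD m] :=
  calc (x : ZMod m) ^ (k + 1) = x ↔ (x : ZMod m) * x ^ k = x * 1 := by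
        rw [pow_succ', mul_one]
    _ ↔ (x : ZMod m) ^ k = 1 := ((ZMod.isUnit_iff_coprime x m).mpr hx).mul_right_inj
    _ ↔ x ^ k ≡ 1 [MOD m] := by
        rw [← Nat.cast_pow, ← Nat.cast_one, ZMod.natCast_eq_natCast_iff]

lemma padicValNat_two_pow_sub_one {x m : ℕ} (hx : Odd x) (hx1 : 1 < x) (hm : Even m)
    (hm0 : m ≠ 0) :
    padicValNat 2 (x ^ m - 1) + 1 = padicValNat 2 (x ^ 2 - 1) + padicValNat 2 m := by
  have hx2 : ¬2 ∣ x := by rwa [← even_iff_two_dvd, Nat.not_even_iff_odd]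
  have hsq := padicValNat.pow_two_sub_one hx1 hx2 two_ne_zero even_two
  rw [padicValNat_self] at hsq
  rw [padicValNat.pow_two_sub_one hx1 hx2 hm0 hm]
  omega

lemma natCast_pow_pow_eq_self_iff_s11 {x n : ℕ} (e : ℕ) (hx : Odd x) (hn : Even n) (hn0 : n ≠ 0) :
    (x : ZMod (2 ^ e)) ^ x ^ n = x ↔ 2 ^ ((e + 3 - padicValNat 2 n) / 2) ∣ x ^ 2 - 1 := by
  rcases eq_or_ne x 1 with rfl | hx1'
  · simp
  have hx1 : 1 < x := by have := hx.pos; omega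
  obtain ⟨K, hK⟩ : ∃ K, x ^ n = K + 1 :=
    ⟨x ^ n - 1, (Nat.sub_add_cancel (Nat.one_le_pow _ _ hx.pos)).symm⟩
  have hKeven : Even K := by
    have := hx.pow (n := n); rw [hK] at this; simpa [parity_simps] using this
  have hK0 : K ≠ 0 := by
    rintro rfl
    exact (Nat.one_lt_pow hn0 hx1).ne' hK
  rw [hK, natCast_pow_succ_eq_self_iff K ((Nat.coprime_two_right.mpr hx).pow_right e),
    Nat.ModEq.comm, Nat.modEq_iff_dvd' (Nat.one_le_pow _ _ hx.pos),
    padicValNat_dvd_iff_le (Nat.sub_ne_zero_of_lt (Nat.one_lt_pow hK0 hx1)),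
    padicValNat_dvd_iff_le (Nat.sub_ne_zero_of_lt (Nat.one_lt_pow two_ne_zero hx1))]
  have hvK := padicValNat_two_pow_sub_one hx hx1 hKeven hK0
  have hvn := padicValNat_two_pow_sub_one hx hx1 hn hn0
  rw [hK, Nat.add_sub_cancel] at hvn
  omega

theorem stmt_11 (n e ℓ : ℕ) (hn : Even n) (hn1 : 0 < n) (hℓ : ℓ = padicValNat 2 n)
    (he : 1 ≤ e) :
    (e ≤ 4 + ℓ →
      ((Finset.Icc 1 (2 ^ e)).filter fun x : ℕ =>
          Odd x ∧ (x : ZMod (2 ^ e)) ^ (x ^ n) = (x : ZMod (2 ^ e))).card = 2 ^ (e - 1)) ∧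
    (5 + ℓ ≤ e →
      ((Finset.Icc 1 (2 ^ e)).filter fun x : ℕ =>
          Odd x ∧ (x : ZMod (2 ^ e)) ^ (x ^ n) = (x : ZMod (2 ^ e))).card =
        2 ^ ((e + ℓ) / 2 + 1)) := by
  have hsol (x : ℕ) (hx : Odd x) := natCast_pow_pow_eq_self_iff_s11 e hx hn hn1.ne'
  rw [← hℓ] at hsol
  constructor
  · intro hle
    have hall (x : ℕ) (hx : Odd x) : (x : ZMod (2 ^ e)) ^ x ^ n = x :=
      (hsol x hx).mpr ((Nat.pow_dvd_pow 2 (by omega : (e + 3 - ℓ) / 2 ≤ 3)).trans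
        (Nat.eight_dvd_sq_sub_one_of_odd hx))
    calc _ = #{x ∈ Icc 1 (2 * 2 ^ (e - 1)) | x ≡ 1 [MOD 2]} := by
          rw [← pow_succ', Nat.sub_add_cancel he]
          exact congrArg card (filter_congr fun x _ => by
            rw [and_iff_left_of_imp (hall x), Nat.odd_iff]; rfl)
      _ = 2 ^ (e - 1) := card_filter_modEq_Icc _ two_pos (by norm_num)
  · intro hge
    set c := (e + 1 - ℓ) / 2
    have hce : c + (e - c) = e := by omega
    calc _ = #{x ∈ Icc 1 (2 ^ c * 2 ^ (e - c)) |
            x ≡ 1 [MOD 2 ^ c] ∨ x ≡ 2 ^ c - 1 [MOD 2 ^ c]} := by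
          rw [← pow_add, hce]
          refine congrArg card (filter_congr fun x _ => ?_)
          rw [modEq_one_or_neg_one_iff (by omega)]
          refine and_congr_right fun hx => ?_
          rw [hsol x hx, show (e + 3 - ℓ) / 2 = c + 1 by omega,
            two_pow_succ_dvd_sq_sub_one_iff c hx]
      _ = 2 * 2 ^ (e - c) := card_filter_modEq_one_or_neg_one_Icc _ (by omega)
      _ = 2 ^ ((e + ℓ) / 2 + 1) := by rw [← pow_succ']; congr 1; omega
end

section
/- For every e ≥ 2, the number of odd residues x modulo 2^e with x ≡ -1 (mod 4) satisfying x^x ≡ x (mod 2^e) is 2^{e-2} if 2 ≤ e ≤ 3 and 2 if e ≥ 4. -/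
lemma aux_fwd (e x : ℕ) (he : 3 ≤ e) (hx1 : 1 ≤ x) (hx2 : x ≤ 2 ^ e) (h4 : x % 4 = 3)
    (hpow : (x : ZMod (2 ^ e)) ^ x = x) : x = 2 ^ (e - 1) - 1 ∨ x = 2 ^ e - 1 := by
  haveI : NeZero (2 ^ e) := ⟨by positivity⟩
  obtain ⟨k, hk⟩ : ∃ k, x = 4 * k + 3 := ⟨x / 4, by omega⟩
  -- x is a unit
  have hcop2 : Nat.Coprime 2 x := (Nat.Prime.coprime_iff_not_dvd Nat.prime_two).mpr (by omega)
  have hu : IsUnit (x : ZMod (2 ^ e)) := by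
    rw [ZMod.isUnit_iff_coprime]; exact (Nat.Coprime.pow_left e hcop2).symm
  set u := hu.unit with hudef
  have huval : (u : ZMod (2 ^ e)) = x := hu.unit_spec
  have hux : u ^ x = u := by
    ext; push_cast [huval]; exact hpow
  have h1 : u ^ (x - 1) = 1 := by
    have h : u ^ (x - 1) * u = 1 * u := by
      rw [← pow_succ, show x - 1 + 1 = x by omega, hux, one_mul]
    exact mul_right_cancel h
  have h2 : (u ^ 2) ^ (2 * k + 1) = 1 := by
    rw [← pow_mul, show 2 * (2 * k + 1) = x - 1 by omega]; exact h1
  have hd1 : orderOf (u ^ 2) ∣ 2 * k + 1 := orderOf_dvd_of_pow_eq_one h2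
  have hd2 : orderOf (u ^ 2) ∣ 2 ^ (e - 1) := by
    have hcard := ZMod.card_units_eq_totient (2 ^ e)
    have htot : Nat.totient (2 ^ e) = 2 ^ (e - 1) := by
      rw [Nat.totient_prime_pow Nat.prime_two (by omega)]; simp
    have := orderOf_dvd_card (G := (ZMod (2 ^ e))ˣ) (x := u ^ 2)
    rwa [hcard, htot] at this
  have hcop : Nat.Coprime (2 * k + 1) (2 ^ (e - 1)) :=
    Nat.Coprime.pow_right _ (((Nat.Prime.coprime_iff_not_dvd Nat.prime_two).mpr (by omega)).symm)
  have hord : orderOf (u ^ 2) = 1 :=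
    Nat.eq_one_of_dvd_one (hcop ▸ Nat.dvd_gcd hd1 hd2)
  have husq : u ^ 2 = 1 := orderOf_eq_one_iff.mp hord
  have hsq : ((x : ZMod (2 ^ e))) ^ 2 = 1 := by
    have := congrArg (Units.val) husq
    push_cast [huval] at this; exact this
  -- back to ℕ
  have hmod : (x ^ 2 : ℕ) ≡ 1 [MOD 2 ^ e] := by
    have : ((x ^ 2 : ℕ) : ZMod (2 ^ e)) = ((1 : ℕ) : ZMod (2 ^ e)) := by push_cast; exact hsq
    exact (ZMod.natCast_eq_natCast_iff _ _ _).mp this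
  have hdvd : 2 ^ e ∣ x ^ 2 - 1 :=
    (Nat.modEq_iff_dvd' (show 1 ≤ x ^ 2 by nlinarith)).mp hmod.symm
  have hxsq : x ^ 2 = 16 * k ^ 2 + 24 * k + 9 := by subst hk; ring
  have hfac : x ^ 2 - 1 = 2 * ((2 * k + 1) * (x + 1)) := by
    have : 2 * ((2 * k + 1) * (x + 1)) = 16 * k ^ 2 + 24 * k + 8 := by subst hk; ring
    omega
  rw [hfac] at hdvd
  have h2e : 2 ^ e = 2 * 2 ^ (e - 1) := by
    rw [← pow_succ']; congr 1; omega
  rw [h2e] at hdvd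
  have hdvd' : 2 ^ (e - 1) ∣ (2 * k + 1) * (x + 1) :=
    (Nat.mul_dvd_mul_iff_left (by norm_num : 0 < 2)).mp hdvd
  have hdvd'' : 2 ^ (e - 1) ∣ x + 1 :=
    (Nat.Coprime.dvd_of_dvd_mul_left hcop.symm hdvd')
  obtain ⟨t, ht⟩ := hdvd''
  have hP : 4 ≤ 2 ^ (e - 1) := by
    calc (4 : ℕ) = 2 ^ 2 := by norm_num
    _ ≤ 2 ^ (e - 1) := Nat.pow_le_pow_right (by norm_num) (by omega)
  have ht2 : t ≤ 2 := by
    by_contra h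
    have h3 : 3 ≤ t := by omega
    have : 2 ^ (e - 1) * 3 ≤ 2 ^ (e - 1) * t := Nat.mul_le_mul_left _ h3
    omega
  interval_cases t <;> omega

lemma aux_sq (e x : ℕ) (he : 1 ≤ e) (hx : 1 ≤ x) (hodd : x % 2 = 1)
    (hdvd : 2 ^ (e - 1) ∣ x + 1) : ((x : ZMod (2 ^ e))) ^ 2 = 1 := by
  obtain ⟨t, ht⟩ := hdvd
  obtain ⟨s, hs⟩ : ∃ s, x - 1 = 2 * s := ⟨(x-1)/2, by omega⟩
  have hfac : (x + 1) * (x - 1) = x ^ 2 - 1 := by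
    rcases x with _ | n
    · omega
    · simp only [Nat.succ_sub_one]
      have : (n + 1) ^ 2 = (n + 1 + 1) * n + 1 := by ring
      omega
  have hdvd2 : 2 ^ e ∣ x ^ 2 - 1 := by
    rw [← hfac, ht, hs]
    have h1 : 2 ^ (e - 1) * t * (2 * s) = 2 ^ (e - 1) * 2 * (t * s) := by ring
    have h2 : 2 ^ (e - 1) * 2 = 2 ^ e := by
      rw [← pow_succ]; congr 1; omega
    rw [h1, h2]; exact Dvd.intro _ rfl
  have hmod : (1 : ℕ) ≡ x ^ 2 [MOD 2 ^ e] :=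
    (Nat.modEq_iff_dvd' (show 1 ≤ x ^ 2 by nlinarith)).mpr hdvd2
  have := (ZMod.natCast_eq_natCast_iff _ _ _).mpr hmod.symm
  push_cast at this
  exact this

lemma aux_pow (e x : ℕ) (h4 : x % 4 = 3) (hsq : ((x : ZMod (2 ^ e))) ^ 2 = 1) :
    (x : ZMod (2 ^ e)) ^ x = x := by
  obtain ⟨k, hk⟩ : ∃ k, x = 2 * k + 1 := ⟨x / 2, by omega⟩
  subst hk
  rw [pow_succ, pow_mul, hsq, one_pow, one_mul]

lemma aux_set (e : ℕ) (he : 3 ≤ e) :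
    ((Finset.Icc 1 (2 ^ e)).filter fun x : ℕ =>
        x % 4 = 3 ∧ (x : ZMod (2 ^ e)) ^ x = (x : ZMod (2 ^ e))) =
      {2 ^ (e - 1) - 1, 2 ^ e - 1} := by
  have hP : 4 ≤ 2 ^ (e - 1) := by
    calc (4 : ℕ) = 2 ^ 2 := by norm_num
    _ ≤ 2 ^ (e - 1) := Nat.pow_le_pow_right (by norm_num) (by omega)
  have h2e : 2 ^ e = 2 * 2 ^ (e - 1) := by rw [← pow_succ']; congr 1; omega
  have h4P : (4 : ℕ) ∣ 2 ^ (e - 1) := by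
    have : 2 ^ (e - 1) = 4 * 2 ^ (e - 3) := by
      rw [show (4:ℕ) = 2 ^ 2 by norm_num, ← pow_add]; congr 1; omega
    exact ⟨2 ^ (e - 3), this⟩
  obtain ⟨c, hc⟩ := h4P
  ext x
  simp only [Finset.mem_filter, Finset.mem_Icc, Finset.mem_insert, Finset.mem_singleton]
  constructor
  · rintro ⟨⟨hx1, hx2⟩, h4, hpow⟩
    exact aux_fwd e x he hx1 hx2 h4 hpow
  · rintro (rfl | rfl)
    · have h4 : (2 ^ (e - 1) - 1) % 4 = 3 := by omega
      refine ⟨⟨by omega, by omega⟩, h4, aux_pow _ _ h4 (aux_sq _ _ (by omega) (by omega) (by omega) ⟨1, by omega⟩)⟩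
    · have h4 : (2 ^ e - 1) % 4 = 3 := by omega
      refine ⟨⟨by omega, by omega⟩, h4, aux_pow _ _ h4 (aux_sq _ _ (by omega) (by omega) (by omega) ⟨2, by omega⟩)⟩

theorem stmt_12 (e : ℕ) (he : 2 ≤ e) :
    (e ≤ 3 →
      ((Finset.Icc 1 (2 ^ e)).filter fun x : ℕ =>
          x % 4 = 3 ∧ (x : ZMod (2 ^ e)) ^ x = (x : ZMod (2 ^ e))).card = 2 ^ (e - 2)) ∧
    (4 ≤ e →
      ((Finset.Icc 1 (2 ^ e)).filter fun x : ℕ =>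
          x % 4 = 3 ∧ (x : ZMod (2 ^ e)) ^ x = (x : ZMod (2 ^ e))).card = 2) := by
  constructor
  · intro h3
    interval_cases e
    · decide
    · decide
  · intro h4
    rw [aux_set e (by omega)]
    rw [Finset.card_insert_of_notMem, Finset.card_singleton]
    simp only [Finset.mem_singleton]
    have hP : 4 ≤ 2 ^ (e - 1) := by
      calc (4 : ℕ) = 2 ^ 2 := by norm_num
      _ ≤ 2 ^ (e - 1) := Nat.pow_le_pow_right (by norm_num) (by omega)
    have h2e : 2 ^ e = 2 * 2 ^ (e - 1) := by rw [← pow_succ']; congr 1; omega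
    omega
end

section
/- For any positive integer m and polynomial g ∈ Z[X], Σ_{x0=1}^{m} Σ_{y0=1}^{m} gcd(m, g(x0)g(y0)−1) = Σ_{d | m} φ(d)·(m/d)^2·N_{G−1}(d), where N_{G−1}(d) is the number of pairs (z1,z2) modulo d with g(z1)g(z2) ≡ 1 (mod d). -/
/-!
Write `gcd(m, a) = ∑_{d ∣ m, d ∣ a} φ(d)` and swap the sums, so that the divisor `d` contributes
`φ(d)` times the number of `(x₀, y₀) ∈ [1, m]²` with `d ∣ g(x₀) g(y₀) - 1`. This condition depends
only on `(x₀ mod d, y₀ mod d)`, and as `d ∣ m` every residue pair is hit exactly `(m / d)²` times.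
-/

open Finset Polynomial

theorem Int.gcd_natCast_eq_sum_totient {n : ℕ} (hn : n ≠ 0) (a : ℤ) :
    Int.gcd n a = ∑ d ∈ n.divisors.filter (fun d : ℕ => (d : ℤ) ∣ a), d.totient := by
  have hdiv : n.divisors.filter (fun d : ℕ => (d : ℤ) ∣ a) =
      {d ∈ n.divisors | d ∣ Int.gcd n a} := by
    refine filter_congr fun d hd => ?_
    rw [← Int.natCast_dvd_natCast, Int.dvd_coe_gcd_iff, Int.natCast_dvd_natCast]
    simp [Nat.dvd_of_mem_divisors hd]
  rw [hdiv, Nat.divisors_filter_dvd_of_dvd hn (Int.natCast_dvd_natCast.1 (Int.gcd_dvd_left _ _)),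
    Nat.sum_totient]

theorem Polynomial.eval_intModEq (g : ℤ[X]) {n a b : ℤ} (h : a ≡ b [ZMOD n]) :
    g.eval a ≡ g.eval b [ZMOD n] :=
  Int.modEq_iff_dvd.2 ((Int.modEq_iff_dvd.1 h).trans (sub_dvd_eval_sub b a g))

theorem Polynomial.natCast_dvd_eval_mul_eval_sub_one_mod_iff (g : ℤ[X]) (d x y : ℕ) :
    (d : ℤ) ∣ g.eval ((x % d : ℕ) : ℤ) * g.eval ((y % d : ℕ) : ℤ) - 1 ↔
      (d : ℤ) ∣ g.eval (x : ℤ) * g.eval (y : ℤ) - 1 := by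
  have hmod (z : ℕ) : g.eval ((z % d : ℕ) : ℤ) ≡ g.eval (z : ℤ) [ZMOD d] :=
    g.eval_intModEq (by push_cast; exact Int.mod_modEq _ _)
  have hprod := (hmod x).mul (hmod y)
  rw [← Int.modEq_iff_dvd, ← Int.modEq_iff_dvd]
  exact ⟨fun h => h.trans hprod, fun h => h.trans hprod.symm⟩

namespace Finset

variable {M : Type*} [AddCommMonoid M]

theorem sum_Ico_mod_eq_sum_range (f : ℕ → M) (n d : ℕ) :
    ∑ x ∈ Ico n (n + d), f (x % d) = ∑ r ∈ range d, f r := by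
  rw [sum_eq_multiset_sum, sum_eq_multiset_sum, range_val, ← Nat.multiset_Ico_map_mod n d,
    Multiset.map_map]
  rfl

theorem sum_Ico_mod_eq_nsmul_sum_range (f : ℕ → M) (n d k : ℕ) :
    ∑ x ∈ Ico n (n + k * d), f (x % d) = k • ∑ r ∈ range d, f r := by
  induction k with
  | zero => simp
  | succ k ih =>
    rw [succ_nsmul, ← ih, ← sum_Ico_mod_eq_sum_range f (n + k * d),
      sum_Ico_consecutive _ (by omega) (by omega), add_assoc, ← Nat.succ_mul]

theorem sum_Icc_mod_eq_nsmul_sum_range (f : ℕ → M) {d m : ℕ} (h : d ∣ m) :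
    ∑ x ∈ Icc 1 m, f (x % d) = (m / d) • ∑ r ∈ range d, f r := by
  rcases Nat.eq_zero_or_pos d with rfl | hd
  · simp_all
  obtain ⟨k, rfl⟩ := h
  rw [← Ico_add_one_right_eq_Icc, add_comm, mul_comm, sum_Ico_mod_eq_nsmul_sum_range,
    Nat.mul_div_cancel _ hd]

theorem sum_Icc_sum_Icc_mod_eq_nsmul_sum_range (f : ℕ → ℕ → M) {d m : ℕ} (h : d ∣ m) :
    ∑ x ∈ Icc 1 m, ∑ y ∈ Icc 1 m, f (x % d) (y % d) =
      (m / d) ^ 2 • ∑ r ∈ range d, ∑ s ∈ range d, f r s := by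
  simp_rw [sum_Icc_mod_eq_nsmul_sum_range (f _) h, ← smul_sum,
    sum_Icc_mod_eq_nsmul_sum_range (fun r => ∑ s ∈ range d, f r s) h, smul_smul, sq]

end Finset

theorem stmt_15 (m : ℕ) (hm : 1 ≤ m) (g : Polynomial ℤ) :
    ∑ x0 ∈ Finset.Icc 1 m, ∑ y0 ∈ Finset.Icc 1 m,
        Int.gcd (m : ℤ) (g.eval (x0 : ℤ) * g.eval (y0 : ℤ) - 1) =
      ∑ d ∈ m.divisors, Nat.totient d * (m / d) ^ 2 *
        (((Finset.range d) ×ˢ (Finset.range d)).filter fun z : ℕ × ℕ =>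
          (d : ℤ) ∣ (g.eval (z.1 : ℤ) * g.eval (z.2 : ℤ) - 1)).card := by
  calc
    _ = ∑ d ∈ m.divisors, ∑ x ∈ Icc 1 m, ∑ y ∈ Icc 1 m,
          if (d : ℤ) ∣ g.eval ((x % d : ℕ) : ℤ) * g.eval ((y % d : ℕ) : ℤ) - 1
          then d.totient else 0 := by
      simp_rw [Int.gcd_natCast_eq_sum_totient (by omega : m ≠ 0), sum_filter,
        g.natCast_dvd_eval_mul_eval_sub_one_mod_iff]
      exact (sum_congr rfl fun x _ => sum_comm).trans sum_comm
    _ = _ := by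
      refine sum_congr rfl fun d hd => ?_
      rw [sum_Icc_sum_Icc_mod_eq_nsmul_sum_range
          (fun r s => if (d : ℤ) ∣ g.eval (r : ℤ) * g.eval (s : ℤ) - 1 then d.totient else 0)
          (Nat.dvd_of_mem_divisors hd),
        ← sum_product', ← sum_filter, sum_const, smul_eq_mul, smul_eq_mul]
      ring
end

section
/- Let p = 2 and n an odd positive integer. The number of pairs (x,y) of odd residues with 1 ≤ x,y ≤ 2^e satisfying x^(x^n) ≡ y (mod 2^e) and y^(y^n) ≡ x (mod 2^e) is 1 if e = 1, 2·2^{e-2} if 2 ≤ e ≤ 4, and 2^⌊(e+1)/2⌋ + 2^{⌊e/3⌋+⌊(e+1)/3⌋} if e ≥ 5. -/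
open Finset

lemma int_dvd_pow_add_one {x : ℤ} (hx : Odd x) {n : ℕ} (hn : Odd n) (k : ℕ) :
    (2:ℤ)^k ∣ x^n + 1 ↔ (2:ℤ)^k ∣ x + 1 := by
  have h2 := geom_sum₂_mul x (-1 : ℤ) n
  rw [Odd.neg_one_pow hn] at h2
  have key : x^n + 1 = (∑ i ∈ Finset.range n, x ^ i * (-1:ℤ) ^ (n - 1 - i)) * (x + 1) := by
    linear_combination -h2
  have hS : ¬ (2:ℤ) ∣ (∑ i ∈ Finset.range n, x ^ i * (-1:ℤ) ^ (n - 1 - i)) := by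
    intro hdvd
    have hcast : ((∑ i ∈ Finset.range n, x ^ i * (-1:ℤ) ^ (n - 1 - i) : ℤ) : ZMod 2) = 0 := by
      rw [ZMod.intCast_zmod_eq_zero_iff_dvd]
      exact_mod_cast hdvd
    obtain ⟨m, hm⟩ := hx
    have hx2 : ((x : ℤ) : ZMod 2) = 1 := by rw [hm]; push_cast; simp [show (2 : ZMod 2) = 0 by decide]
    rw [show ((∑ i ∈ Finset.range n, x ^ i * (-1:ℤ) ^ (n - 1 - i) : ℤ) : ZMod 2)
        = ∑ i ∈ Finset.range n, ((x:ZMod 2)) ^ i * ((-1:ZMod 2)) ^ (n - 1 - i) by push_cast; rfl]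
      at hcast
    have hneg : (-1 : ZMod 2) = 1 := by decide
    simp only [hx2, hneg, one_pow, one_mul, Finset.sum_const, Finset.card_range,
      nsmul_eq_mul, mul_one] at hcast
    have : (n : ZMod 2) = 1 := by
      obtain ⟨j, hj⟩ := hn; subst hj; push_cast; simp [show (2 : ZMod 2) = 0 by decide]
    rw [this] at hcast
    exact one_ne_zero hcast
  have hcop : IsCoprime ((2:ℤ)^k) (∑ i ∈ Finset.range n, x ^ i * (-1:ℤ) ^ (n - 1 - i)) :=
    ((Int.prime_two.coprime_iff_not_dvd).mpr hS).pow_left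
  rw [key]
  exact ⟨fun h => hcop.dvd_of_dvd_mul_left h, fun h => h.mul_left _⟩


lemma nat_dvd_pow_add_one {x : ℕ} (hx : Odd x) {n : ℕ} (hn : Odd n) (k : ℕ) :
    2^k ∣ x^n + 1 ↔ 2^k ∣ x + 1 := by
  have := int_dvd_pow_add_one (x := (x:ℤ)) (by exact_mod_cast hx) hn k
  constructor
  · intro h
    have : (2:ℤ)^k ∣ (x:ℤ) + 1 := this.mp (by exact_mod_cast h)
    exact_mod_cast this
  · intro h
    have : (2:ℤ)^k ∣ (x:ℤ)^n + 1 := this.mpr (by exact_mod_cast h)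
    exact_mod_cast this

lemma pv_eq_of_dvd_iff {a b : ℕ} (ha : a ≠ 0) (hb : b ≠ 0)
    (h : ∀ k, 2^k ∣ a ↔ 2^k ∣ b) : padicValNat 2 a = padicValNat 2 b :=
  le_antisymm ((padicValNat_dvd_iff_le hb).mp ((h _).mp pow_padicValNat_dvd))
    ((padicValNat_dvd_iff_le ha).mp ((h _).mpr pow_padicValNat_dvd))

lemma lte2 {x M : ℕ} (hx3 : 3 ≤ x) (hxo : Odd x) (hM : M ≠ 0) (hMe : Even M) :
    padicValNat 2 (x ^ M - 1) + 1 =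
      padicValNat 2 (x + 1) + padicValNat 2 (x - 1) + padicValNat 2 M := by
  have hdvd : 2 ∣ x - 1 := by obtain ⟨m, hm⟩ := hxo; omega
  have hnd : ¬ 2 ∣ x := by obtain ⟨m, hm⟩ := hxo; omega
  have := padicValNat.pow_two_sub_pow (x := x) (y := 1) (by omega) (by simpa) hnd hM hMe
  simpa using this


lemma key (n e : ℕ) (hn : Odd n) (hn1 : 0 < n) (he : 1 ≤ e) {x : ℕ}
    (hx1 : 1 ≤ x) (hx2 : x ≤ 2 ^ e) :
    (∃ y : ℕ, y ∈ Finset.Icc 1 (2 ^ e) ∧ Odd x ∧ Odd y ∧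
        (x : ZMod (2 ^ e)) ^ (x ^ n) = (y : ZMod (2 ^ e)) ∧
        (y : ZMod (2 ^ e)) ^ (y ^ n) = (x : ZMod (2 ^ e))) ↔
      (2 ^ (max 2 (e / 2)) ∣ x - 1 ∨ 2 ^ (max 2 ((e + 2) / 3)) ∣ x + 1) := by
  have hN1 : 1 < 2 ^ e := Nat.one_lt_two_pow_iff.mpr (by omega)
  have h2dvd : (2:ℕ) ∣ 2 ^ e := dvd_pow_self 2 (by omega)
  by_cases hodd : Odd x
  swap
  · constructor
    · rintro ⟨y, _, hxo, _⟩; exact absurd hxo hodd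
    · rw [Nat.odd_iff] at hodd
      rintro (h | h)
      · have h4 : (2:ℕ) ∣ x - 1 := dvd_trans (dvd_pow_self 2 (by omega : max 2 (e/2) ≠ 0)) h
        omega
      · have h4 : (2:ℕ) ∣ x + 1 := dvd_trans (dvd_pow_self 2 (by omega : max 2 ((e+2)/3) ≠ 0)) h
        omega
  rcases eq_or_lt_of_le hx1 with hx1' | hx3'
  · -- x = 1
    obtain rfl : x = 1 := hx1'.symm
    refine iff_of_true ⟨1, ?_, odd_one, odd_one, ?_, ?_⟩ (Or.inl (by simp))
    · exact Finset.mem_Icc.mpr ⟨le_refl _, hN1.le⟩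
    · push_cast; simp
    · push_cast; simp
  have hx3 : 3 ≤ x := by rw [Nat.odd_iff] at hodd; omega
  haveI : NeZero (2 ^ e) := ⟨by positivity⟩
  haveI : Fact (1 < 2 ^ e) := ⟨hN1⟩
  set v : ZMod (2 ^ e) := (x : ZMod (2 ^ e)) ^ (x ^ n) with hv
  set y : ℕ := v.val with hy
  have hcop : Nat.Coprime x (2 ^ e) := Nat.Coprime.pow_right e (Nat.coprime_two_right.mpr hodd)
  have hvu : IsUnit v := ((ZMod.isUnit_iff_coprime x (2 ^ e)).mpr hcop).pow _
  have hvne : v ≠ 0 := by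
    intro h; rw [h, isUnit_zero_iff] at hvu; exact zero_ne_one hvu
  have hy1 : 1 ≤ y := Nat.pos_of_ne_zero (by simpa [hy, ZMod.val_eq_zero] using hvne)
  have hylt : y < 2 ^ e := ZMod.val_lt v
  have hvy : (y : ZMod (2 ^ e)) = v := by rw [hy]; simp [ZMod.natCast_val, ZMod.cast_id]
  have hyx : y ≡ x ^ x ^ n [MOD 2 ^ e] := by
    rw [← ZMod.natCast_eq_natCast_iff, hvy, hv]; push_cast; rfl
  have hyo : Odd y := by
    have h2 : y ≡ x ^ x ^ n [MOD 2] := hyx.of_dvd h2dvd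
    have hxp : Odd (x ^ x ^ n) := hodd.pow
    rw [Nat.odd_iff] at hxp ⊢
    unfold Nat.ModEq at h2; omega
  -- reduce to single condition
  have hLHS : (∃ y' : ℕ, y' ∈ Finset.Icc 1 (2 ^ e) ∧ Odd x ∧ Odd y' ∧
        (x : ZMod (2 ^ e)) ^ (x ^ n) = (y' : ZMod (2 ^ e)) ∧
        (y' : ZMod (2 ^ e)) ^ (y' ^ n) = (x : ZMod (2 ^ e))) ↔
      ((y : ZMod (2 ^ e)) ^ (y ^ n) = (x : ZMod (2 ^ e))) := by
    constructor
    · rintro ⟨y', hmem, -, hy'o, h1, h2⟩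
      rw [Finset.mem_Icc] at hmem
      have hy'lt : y' < 2 ^ e := by
        rcases eq_or_lt_of_le hmem.2 with hh | hh
        · exfalso; rw [Nat.odd_iff] at hy'o
          have : (2:ℕ) ∣ y' := hh ▸ h2dvd
          omega
        · exact hh
      have : y' = y := by
        have : (y' : ZMod (2 ^ e)) = v := h1.symm
        have := congrArg ZMod.val this
        rwa [ZMod.val_natCast, Nat.mod_eq_of_lt hy'lt] at this
      rwa [this] at h2
    · intro h
      exact ⟨y, Finset.mem_Icc.mpr ⟨hy1, by omega⟩, hodd, hyo, hvy.symm, h⟩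
  rw [hLHS]
  -- chain
  set K := x ^ n * y ^ n with hK
  have hKodd : Odd K := (hodd.pow).mul (hyo.pow)
  have hxnge : 3 ≤ x ^ n := le_trans hx3 (Nat.le_self_pow (by omega) x)
  have hK3 : 3 ≤ K := le_trans hxnge (Nat.le_mul_of_pos_right _ (by positivity))
  set M := K - 1 with hM
  have hM2 : 2 ≤ M := by omega
  have hMe : Even M := Nat.Odd.sub_odd hKodd odd_one
  have hxM0 : x ^ M - 1 ≠ 0 := by
    have : 1 < x ^ M := Nat.one_lt_pow (by omega) (by omega)
    omega
  have h1 : ((y : ZMod (2 ^ e)) ^ (y ^ n) = (x : ZMod (2 ^ e))) ↔ x ^ K ≡ x [MOD 2 ^ e] := by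
    rw [hvy, hv, ← pow_mul, ← hK,
      show ((x:ℕ) : ZMod (2^e)) ^ K = ((x ^ K : ℕ) : ZMod (2^e)) by push_cast; rfl,
      ZMod.natCast_eq_natCast_iff]
  have h2 : (x ^ K ≡ x [MOD 2 ^ e]) ↔ x ^ M ≡ 1 [MOD 2 ^ e] := by
    have hxK : x ^ K = x * x ^ M := by
      rw [← pow_succ']; congr 1; omega
    constructor
    · intro h
      refine Nat.ModEq.cancel_left_of_coprime hcop.symm ?_
      rw [mul_one, ← hxK]; simpa using h
    · intro h
      have := h.mul_left x
      rw [← hxK, mul_one] at this; exact this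
  have h3 : (x ^ M ≡ 1 [MOD 2 ^ e]) ↔ 2 ^ e ∣ x ^ M - 1 := by
    have h1M : 1 ≤ x ^ M := Nat.one_le_pow _ _ (by omega)
    exact ⟨fun h => (Nat.modEq_iff_dvd' h1M).mp h.symm,
      fun h => ((Nat.modEq_iff_dvd' h1M).mpr h).symm⟩
  have h4 : (2 ^ e ∣ x ^ M - 1) ↔ e ≤ padicValNat 2 (x ^ M - 1) :=
    padicValNat_dvd_iff_le hxM0
  rw [h1, h2, h3, h4]
  -- valuations
  set A := padicValNat 2 (x - 1) with hA
  set B := padicValNat 2 (x + 1) with hB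
  set C := padicValNat 2 (1 + x ^ n) with hC
  have hxo2 : x % 2 = 1 := Nat.odd_iff.mp hodd
  have hA1 : 1 ≤ A := one_le_padicValNat_of_dvd (by omega) (by omega)
  have hB1 : 1 ≤ B := one_le_padicValNat_of_dvd (by omega) (by omega)
  have hLTE : padicValNat 2 (x ^ M - 1) + 1 = B + A + padicValNat 2 M :=
    lte2 hx3 hodd (by omega) hMe
  set E := n * (1 + x ^ n) with hE
  have hxne : x ^ n % 2 = 1 := Nat.odd_iff.mp hodd.pow
  have hE0 : E ≠ 0 := by
    have : 1 ≤ x ^ n := Nat.one_le_pow _ _ (by omega)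
    positivity
  have hn2 : n % 2 = 1 := Nat.odd_iff.mp hn
  have h4pow : ∀ m : ℕ, 2 ≤ m → (4:ℕ) ∣ 2 ^ m := fun m hm => by
    rw [show (4:ℕ) = 2 ^ 2 by norm_num]; exact pow_dvd_pow 2 hm
  have hEe : Even E := by
    have : Even (1 + x ^ n) := by rw [add_comm]; exact hodd.pow.add_one
    exact this.mul_left n
  have hM'0 : x ^ E - 1 ≠ 0 := by
    have h1E : 1 ≤ E := by omega
    have : 1 < x ^ E := Nat.one_lt_pow hE0 (by omega)
    omega
  have hLTE' : padicValNat 2 (x ^ E - 1) + 1 = B + A + C := by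
    have := lte2 hx3 hodd hE0 hEe
    rwa [hE, padicValNat.mul (by omega) (by omega),
      padicValNat.eq_zero_of_not_dvd (by omega : ¬ 2 ∣ n), zero_add, ← hC] at this
  set M' := x ^ E - 1 with hM'
  -- M ≡ M' [MOD 2^e]
  have hMM' : M ≡ M' [MOD 2 ^ e] := by
    have h5 : x ^ n * y ^ n ≡ x ^ n * (x ^ x ^ n) ^ n [MOD 2 ^ e] := (hyx.pow n).mul_left _
    have h6 : x ^ n * (x ^ x ^ n) ^ n = x ^ E := by
      rw [← pow_mul, ← pow_add]; congr 1; rw [hE]; ring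
    rw [h6, ← hK] at h5
    have h7 : M + 1 = K := by omega
    have h8 : M' + 1 = x ^ E := by
      have : 1 ≤ x ^ E := Nat.one_le_pow _ _ (by omega)
      omega
    exact Nat.ModEq.add_right_cancel' 1 (by rw [h7, h8]; exact h5)
  -- main numeric equivalence
  have hMain : (e ≤ padicValNat 2 (x ^ M - 1)) ↔ (e + 2 ≤ 2 * A + 2 * B + C) := by
    rcases le_or_gt e (padicValNat 2 M') with hc | hc
    · have hdM' : 2 ^ e ∣ M' := dvd_trans (pow_dvd_pow 2 hc) pow_padicValNat_dvd
      have hdM : 2 ^ e ∣ M :=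
        Nat.modEq_zero_iff_dvd.mp (hMM'.trans (Nat.modEq_zero_iff_dvd.mpr hdM'))
      have hvM : e ≤ padicValNat 2 M := (padicValNat_dvd_iff_le (by omega)).mp hdM
      omega
    · have hveq : padicValNat 2 M = padicValNat 2 M' := by
        refine le_antisymm ?_ ?_
        · by_contra h'
          push_neg at h'
          have hd1 : 2 ^ (padicValNat 2 M' + 1) ∣ M :=
            dvd_trans (pow_dvd_pow 2 h') pow_padicValNat_dvd
          have hd2 : 2 ^ (padicValNat 2 M' + 1) ∣ M' :=
            Nat.modEq_zero_iff_dvd.mp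
              (((hMM'.of_dvd (pow_dvd_pow 2 (by omega))).symm).trans
                (Nat.modEq_zero_iff_dvd.mpr hd1))
          have := (padicValNat_dvd_iff_le hM'0).mp hd2
          omega
        · have hd1 : 2 ^ (padicValNat 2 M') ∣ M' := pow_padicValNat_dvd
          have hd2 : 2 ^ (padicValNat 2 M') ∣ M :=
            Nat.modEq_zero_iff_dvd.mp
              ((hMM'.of_dvd (pow_dvd_pow 2 (by omega))).trans
                (Nat.modEq_zero_iff_dvd.mpr hd1))
          exact (padicValNat_dvd_iff_le (by omega)).mp hd2
      omega
  rw [hMain]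
  -- case split on x mod 4
  have h4cases : 4 ∣ x - 1 ∨ 4 ∣ x + 1 := by omega
  rcases h4cases with hd | hd
  · have hA2 : 2 ≤ A := (padicValNat_dvd_iff_le (by omega)).mp (by norm_num; exact hd)
    have hBe : B = 1 := by
      refine le_antisymm ?_ hB1
      by_contra h'
      push_neg at h'
      have : (4:ℕ) ∣ x + 1 :=
        dvd_trans (h4pow B h') pow_padicValNat_dvd
      omega
    have hx4 : x % 4 = 1 := by omega
    have hxn4 : x ^ n % 4 = 1 := by rw [Nat.pow_mod, hx4, one_pow]; rfl
    have hCe : C = 1 := by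
      refine le_antisymm ?_ (one_le_padicValNat_of_dvd (by omega) (by omega))
      by_contra h'
      push_neg at h'
      have : (4:ℕ) ∣ 1 + x ^ n :=
        dvd_trans (h4pow C h') pow_padicValNat_dvd
      omega
    have hQ2 : ¬ 2 ^ (max 2 ((e + 2) / 3)) ∣ x + 1 := by
      intro h
      have : (4:ℕ) ∣ x + 1 :=
        dvd_trans (pow_dvd_pow 2 (le_max_left 2 _)) h
      omega
    have hQ1 : (2 ^ (max 2 (e / 2)) ∣ x - 1) ↔ (2 ≤ A ∧ e / 2 ≤ A) := by
      rw [padicValNat_dvd_iff_le (by omega), max_le_iff]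
    constructor
    · intro h; left; rw [hQ1]; omega
    · rintro (h | h)
      · rw [hQ1] at h; omega
      · exact absurd h hQ2
  · have hB2 : 2 ≤ B := (padicValNat_dvd_iff_le (by omega)).mp (by norm_num; exact hd)
    have hAe : A = 1 := by
      refine le_antisymm ?_ hA1
      by_contra h'
      push_neg at h'
      have : (4:ℕ) ∣ x - 1 :=
        dvd_trans (h4pow A h') pow_padicValNat_dvd
      omega
    have hCe : C = B := by
      refine pv_eq_of_dvd_iff (by omega) (by omega) (fun k => ?_)
      rw [add_comm 1 (x ^ n)]
      exact nat_dvd_pow_add_one hodd hn k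
    have hQ2 : ¬ 2 ^ (max 2 (e / 2)) ∣ x - 1 := by
      intro h
      have : (4:ℕ) ∣ x - 1 :=
        dvd_trans (pow_dvd_pow 2 (le_max_left 2 _)) h
      omega
    have hQ1 : (2 ^ (max 2 ((e + 2) / 3)) ∣ x + 1) ↔ (2 ≤ B ∧ (e + 2) / 3 ≤ B) := by
      rw [padicValNat_dvd_iff_le (by omega), max_le_iff]
    constructor
    · intro h; right; rw [hQ1]; omega
    · rintro (h | h)
      · exact absurd h hQ2
      · rw [hQ1] at h; omega


lemma countA (e k : ℕ) (hk : 1 ≤ k) (hke : k ≤ e) :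
    ((Finset.Icc 1 (2^e)).filter (fun x => 2^k ∣ x - 1)).card = 2^(e-k) := by
  have hpk : 0 < 2^k := by positivity
  have h2 : 2^k * 2^(e-k) = 2^e := by rw [← pow_add]; congr 1; omega
  rw [show 2^(e-k) = (Finset.range (2^(e-k))).card from (Finset.card_range _).symm]
  refine Finset.card_bij' (fun x _ => (x-1)/2^k) (fun m _ => 2^k*m+1) ?_ ?_ ?_ ?_
  · intro x hx
    simp only [Finset.mem_filter, Finset.mem_Icc] at hx
    obtain ⟨⟨hx1, hx2⟩, c, hc⟩ := hx
    show (x-1)/2^k ∈ Finset.range (2^(e-k))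
    rw [hc, Nat.mul_div_cancel_left _ hpk, Finset.mem_range]
    by_contra hcb
    push_neg at hcb
    have h3 := Nat.mul_le_mul_left (2^k) hcb
    rw [h2] at h3
    omega
  · intro m hm
    rw [Finset.mem_range] at hm
    simp only [Finset.mem_filter, Finset.mem_Icc]
    have h4 : 2^k * (m+1) ≤ 2^k * 2^(e-k) := Nat.mul_le_mul_left _ (by omega)
    rw [h2, Nat.mul_add, mul_one] at h4
    exact ⟨⟨by omega, by omega⟩, by simp⟩
  · intro x hx
    simp only [Finset.mem_filter, Finset.mem_Icc] at hx
    obtain ⟨⟨hx1, hx2⟩, c, hc⟩ := hx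
    show 2^k * ((x-1)/2^k) + 1 = x
    rw [hc, Nat.mul_div_cancel_left _ hpk]
    omega
  · intro m hm
    show (2^k*m+1-1)/2^k = m
    simp [Nat.mul_div_cancel_left _ hpk]

lemma countB (e k : ℕ) (hk : 1 ≤ k) (hke : k ≤ e) :
    ((Finset.Icc 1 (2^e)).filter (fun x => 2^k ∣ x + 1)).card = 2^(e-k) := by
  have hpk : 2 ≤ 2^k := by
    calc (2:ℕ) = 2^1 := by norm_num
    _ ≤ 2^k := Nat.pow_le_pow_right (by norm_num) hk
  have h2 : 2^k * 2^(e-k) = 2^e := by rw [← pow_add]; congr 1; omega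
  rw [show 2^(e-k) = (Finset.range (2^(e-k))).card from (Finset.card_range _).symm]
  refine Finset.card_bij' (fun x _ => (x+1)/2^k - 1) (fun m _ => 2^k*(m+1)-1) ?_ ?_ ?_ ?_
  · intro x hx
    simp only [Finset.mem_filter, Finset.mem_Icc] at hx
    obtain ⟨⟨hx1, hx2⟩, c, hc⟩ := hx
    show (x+1)/2^k - 1 ∈ Finset.range (2^(e-k))
    rw [hc, Nat.mul_div_cancel_left _ (by omega), Finset.mem_range]
    rcases Nat.eq_zero_or_pos c with rfl | hc1
    · simp at hc
    by_contra hcb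
    push_neg at hcb
    have h3 : 2^k * (2^(e-k)+1) ≤ 2^k * c := Nat.mul_le_mul_left _ (by omega)
    rw [Nat.mul_add, h2, mul_one] at h3
    omega
  · intro m hm
    rw [Finset.mem_range] at hm
    simp only [Finset.mem_filter, Finset.mem_Icc]
    have h4 : 2^k * (m+1) ≤ 2^k * 2^(e-k) := Nat.mul_le_mul_left _ (by omega)
    rw [h2] at h4
    have h5 : 2^k * 1 ≤ 2^k * (m+1) := Nat.mul_le_mul_left _ (by omega)
    rw [mul_one] at h5
    refine ⟨⟨by omega, by omega⟩, ?_⟩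
    have h6 : 2^k*(m+1)-1+1 = 2^k*(m+1) := by omega
    rw [h6]
    exact Dvd.intro _ rfl
  · intro x hx
    simp only [Finset.mem_filter, Finset.mem_Icc] at hx
    obtain ⟨⟨hx1, hx2⟩, c, hc⟩ := hx
    show 2^k * ((x+1)/2^k - 1 + 1) - 1 = x
    rw [hc, Nat.mul_div_cancel_left _ (by omega)]
    rcases Nat.eq_zero_or_pos c with rfl | hc1
    · simp at hc
    rw [show c - 1 + 1 = c by omega]
    omega
  · intro m hm
    show (2^k*(m+1)-1+1)/2^k - 1 = m
    have h7 : 2^k*(m+1)-1+1 = 2^k*(m+1) := by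
      have h5 : 2^k * 1 ≤ 2^k * (m+1) := Nat.mul_le_mul_left _ (by omega)
      omega
    rw [h7, Nat.mul_div_cancel_left _ (by omega)]
    omega


lemma uniq_y (n e : ℕ) (he : 1 ≤ e) {x y y' : ℕ}
    (hy : y ≤ 2 ^ e) (hy' : y' ≤ 2 ^ e) (hyo : Odd y) (hy'o : Odd y')
    (h1 : (x : ZMod (2 ^ e)) ^ (x ^ n) = (y : ZMod (2 ^ e)))
    (h2 : (x : ZMod (2 ^ e)) ^ (x ^ n) = (y' : ZMod (2 ^ e))) : y = y' := by
  haveI : NeZero (2 ^ e) := ⟨by positivity⟩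
  have h2e : (2:ℕ) ∣ 2 ^ e := dvd_pow_self 2 (by omega)
  have hylt : y < 2 ^ e := by
    rcases eq_or_lt_of_le hy with h | h
    · exfalso; rw [Nat.odd_iff] at hyo; omega
    · exact h
  have hy'lt : y' < 2 ^ e := by
    rcases eq_or_lt_of_le hy' with h | h
    · exfalso; rw [Nat.odd_iff] at hy'o; omega
    · exact h
  have : (y : ZMod (2 ^ e)) = (y' : ZMod (2 ^ e)) := by rw [← h1, ← h2]
  have := congrArg ZMod.val this
  rwa [ZMod.val_natCast, ZMod.val_natCast, Nat.mod_eq_of_lt hylt,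
    Nat.mod_eq_of_lt hy'lt] at this

lemma main_card (n e : ℕ) (hn : Odd n) (hn1 : 0 < n) (he : 1 ≤ e) :
    (((Finset.Icc 1 (2 ^ e)) ×ˢ (Finset.Icc 1 (2 ^ e))).filter
        fun xy : ℕ × ℕ => Odd xy.1 ∧ Odd xy.2 ∧
          (xy.1 : ZMod (2 ^ e)) ^ (xy.1 ^ n) = (xy.2 : ZMod (2 ^ e)) ∧
          (xy.2 : ZMod (2 ^ e)) ^ (xy.2 ^ n) = (xy.1 : ZMod (2 ^ e))).card =
    ((Finset.Icc 1 (2^e)).filter (fun x => 2 ^ (max 2 (e/2)) ∣ x - 1)).card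
    + ((Finset.Icc 1 (2^e)).filter (fun x => 2 ^ (max 2 ((e+2)/3)) ∣ x + 1)).card := by
  have hdisj : Disjoint
      ((Finset.Icc 1 (2^e)).filter (fun x => 2 ^ (max 2 (e/2)) ∣ x - 1))
      ((Finset.Icc 1 (2^e)).filter (fun x => 2 ^ (max 2 ((e+2)/3)) ∣ x + 1)) := by
    rw [Finset.disjoint_left]
    intro a ha hb
    simp only [Finset.mem_filter, Finset.mem_Icc] at ha hb
    have h1 : (4:ℕ) ∣ a - 1 := dvd_trans
      (dvd_trans (by norm_num : (4:ℕ) ∣ 2^2) (pow_dvd_pow 2 (le_max_left 2 _))) ha.2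
    have h2 : (4:ℕ) ∣ a + 1 := dvd_trans
      (dvd_trans (by norm_num : (4:ℕ) ∣ 2^2) (pow_dvd_pow 2 (le_max_left 2 _))) hb.2
    omega
  rw [← Finset.card_union_of_disjoint hdisj, ← Finset.filter_or]
  refine Finset.card_bij (fun xy _ => xy.1) ?_ ?_ ?_
  · intro xy hxy
    simp only [Finset.mem_filter, Finset.mem_product, Finset.mem_Icc] at hxy ⊢
    obtain ⟨⟨⟨ha1, ha2⟩, hb1, hb2⟩, ho1, ho2, he1, he2⟩ := hxy
    refine ⟨⟨ha1, ha2⟩, ?_⟩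
    exact (key n e hn hn1 he ha1 ha2).mp
      ⟨xy.2, Finset.mem_Icc.mpr ⟨hb1, hb2⟩, ho1, ho2, he1, he2⟩
  · intro a ha b hb hab
    simp only [Finset.mem_filter, Finset.mem_product, Finset.mem_Icc] at ha hb
    obtain ⟨⟨⟨ha1, ha2⟩, ha3, ha4⟩, ho1, ho2, he1, he2⟩ := ha
    obtain ⟨⟨⟨hb1, hb2⟩, hb3, hb4⟩, po1, po2, pe1, pe2⟩ := hb
    have hfst : a.1 = b.1 := hab
    have hsnd : a.2 = b.2 := by
      apply uniq_y n e he ha4 hb4 ho2 po2 he1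
      rw [hfst]; exact pe1
    exact Prod.ext hfst hsnd
  · intro x hx
    simp only [Finset.mem_filter, Finset.mem_Icc] at hx
    obtain ⟨⟨hx1, hx2⟩, hQ⟩ := hx
    obtain ⟨y, hymem, ho1, ho2, he1, he2⟩ := (key n e hn hn1 he hx1 hx2).mpr hQ
    rw [Finset.mem_Icc] at hymem
    refine ⟨(x, y), ?_, rfl⟩
    simp only [Finset.mem_filter, Finset.mem_product, Finset.mem_Icc]
    exact ⟨⟨⟨hx1, hx2⟩, hymem⟩, ho1, ho2, he1, he2⟩

theorem stmt_19 (n e : ℕ) (hn : Odd n) (hn1 : 0 < n) (he : 1 ≤ e) :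
    (e = 1 →
      (((Finset.Icc 1 (2 ^ e)) ×ˢ (Finset.Icc 1 (2 ^ e))).filter
          fun xy : ℕ × ℕ => Odd xy.1 ∧ Odd xy.2 ∧
            (xy.1 : ZMod (2 ^ e)) ^ (xy.1 ^ n) = (xy.2 : ZMod (2 ^ e)) ∧
            (xy.2 : ZMod (2 ^ e)) ^ (xy.2 ^ n) = (xy.1 : ZMod (2 ^ e))).card = 1) ∧
    (2 ≤ e → e ≤ 4 →
      (((Finset.Icc 1 (2 ^ e)) ×ˢ (Finset.Icc 1 (2 ^ e))).filter
          fun xy : ℕ × ℕ => Odd xy.1 ∧ Odd xy.2 ∧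
            (xy.1 : ZMod (2 ^ e)) ^ (xy.1 ^ n) = (xy.2 : ZMod (2 ^ e)) ∧
            (xy.2 : ZMod (2 ^ e)) ^ (xy.2 ^ n) = (xy.1 : ZMod (2 ^ e))).card =
        2 * 2 ^ (e - 2)) ∧
    (5 ≤ e →
      (((Finset.Icc 1 (2 ^ e)) ×ˢ (Finset.Icc 1 (2 ^ e))).filter
          fun xy : ℕ × ℕ => Odd xy.1 ∧ Odd xy.2 ∧
            (xy.1 : ZMod (2 ^ e)) ^ (xy.1 ^ n) = (xy.2 : ZMod (2 ^ e)) ∧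
            (xy.2 : ZMod (2 ^ e)) ^ (xy.2 ^ n) = (xy.1 : ZMod (2 ^ e))).card =
        2 ^ ((e + 1) / 2) + 2 ^ (e / 3 + (e + 1) / 3)) := by
  refine ⟨?_, ?_, ?_⟩
  · intro he1
    subst he1
    rw [main_card n 1 hn hn1 le_rfl]
    norm_num
    decide
  · intro he2 he4
    rw [main_card n e hn hn1 he]
    rw [Nat.max_eq_left (by omega : e/2 ≤ 2), Nat.max_eq_left (by omega : (e+2)/3 ≤ 2),
      countA e 2 (by omega) (by omega), countB e 2 (by omega) (by omega)]
    rw [two_mul]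
  · intro he5
    rw [main_card n e hn hn1 he]
    rw [Nat.max_eq_right (by omega : 2 ≤ e/2), Nat.max_eq_right (by omega : 2 ≤ (e+2)/3),
      countA e (e/2) (by omega) (by omega), countB e ((e+2)/3) (by omega) (by omega)]
    congr 1
    · congr 1; omega
    · congr 1; omega
end
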